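/- arXiv:2310.09931 — 7 statements merged into one kernel-verified Lean document; each statement's English description precedes it below -/
import Mathlib

section
/- Let π be a probability measure on ℝ with inf supp(π) < 0 < sup supp(π), and fix γ₂ > 0. Then the map γ₁ ↦ ∫ x dπ^{(γ₁,γ₂)}(x) (the mean of the tilted measure) is strictly increasing on ℝ. -/
open MeasureTheory ProbabilityTheory Filter Set

/-- The (topological) support of a measure on `ℝ`: points all of whose neighborhoods
have positive measure. -/
def msupp (pr : MeasureTheory.Measure ℝ) : Set ℝ := {x : ℝ | ∀ U ∈ nhds x, pr U ≠ 0}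

/-- The cumulant generating function `c(γ₁, γ₂) = log ∫ exp(γ₁ x - γ₂/2 x²) dπ(x)`. -/
noncomputable def cgf (pr : MeasureTheory.Measure ℝ) (γ₁ γ₂ : ℝ) : ℝ :=
  Real.log (∫ x, Real.exp (γ₁ * x - γ₂ / 2 * x ^ 2) ∂pr)

/-- The exponentially tilted measure `π^{(γ₁, γ₂)}`, with density
`exp(γ₁ x - γ₂/2 x² - c(γ₁,γ₂))` with respect to `π`. -/
noncomputable def tilt (pr : MeasureTheory.Measure ℝ) (γ₁ γ₂ : ℝ) : MeasureTheory.Measure ℝ :=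
  pr.withDensity fun x => ENNReal.ofReal (Real.exp (γ₁ * x - γ₂ / 2 * x ^ 2 - cgf pr γ₁ γ₂))

/-- The mean of the tilted measure `π^{(γ₁, γ₂)}`. -/
noncomputable def tiltMean (pr : MeasureTheory.Measure ℝ) (γ₁ γ₂ : ℝ) : ℝ :=
  ∫ x, x ∂(tilt pr γ₁ γ₂)

/-! Write `w_γ(x) = exp (γ x - γ₂ x² / 2)`. The tilted mean is `∫ x w_γ dπ / ∫ w_γ dπ`, and for
`γ < γ'` we have `w_γ' = w_γ · r` with `r x = exp ((γ' - γ) x)` strictly increasing. For a positive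
weight `w` with `w`-mean `m`, centering gives `∫ (x - m) r w = ∫ (x - m) (r x - r m) w`, whose
integrand is nonnegative and vanishes only at `x = m`; so the mean strictly increases as soon as
`π` is not a point mass, which the two support points of opposite sign guarantee. -/

open Real

lemma measure_compl_singleton_ne_zero_of_mem_msupp {μ : Measure ℝ} {x y : ℝ} (hx : x ∈ msupp μ)
    (hy : y ∈ msupp μ) (hxy : x ≠ y) (m : ℝ) : μ {m}ᶜ ≠ 0 := by
  by_cases hxm : x = m
  · subst hxm
    exact hy _ (isOpen_compl_singleton.mem_nhds hxy.symm)
  · exact hx _ (isOpen_compl_singleton.mem_nhds hxm)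

theorem integral_mul_lt_of_strictMono {μ : Measure ℝ} {w r : ℝ → ℝ} (hw : ∀ x, 0 < w x)
    (hr : StrictMono r) (hw_int : Integrable w μ) (hxw_int : Integrable (fun x => x * w x) μ)
    (hwr_int : Integrable (fun x => w x * r x) μ)
    (hxwr_int : Integrable (fun x => x * (w x * r x)) μ) (hμ : ∀ m, μ {m}ᶜ ≠ 0) :
    (∫ x, x * w x ∂μ) * ∫ x, w x * r x ∂μ < (∫ x, x * (w x * r x) ∂μ) * ∫ x, w x ∂μ := by
  set Z := ∫ x, w x ∂μ
  have hZ : 0 < Z := by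
    rw [integral_pos_iff_support_of_nonneg (fun x => (hw x).le) hw_int,
      Function.support_eq_univ fun x => (hw x).ne']
    exact pos_iff_ne_zero.2 fun h => hμ 0 (measure_mono_null (subset_univ _) h)
  set m := (∫ x, x * w x ∂μ) / Z
  have hmZ : ∫ x, x * w x ∂μ = m * Z := (div_mul_cancel₀ _ hZ.ne').symm
  have hxwr_centered : Integrable (fun x => x * (w x * r x) - m * (w x * r x)) μ :=
    hxwr_int.sub (hwr_int.const_mul m)
  have hxw_centered : Integrable (fun x => x * w x - m * w x) μ :=
    hxw_int.sub (hw_int.const_mul m)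
  have hcentered : ∫ x, (x * w x - m * w x) ∂μ = 0 := by
    rw [integral_sub hxw_int (hw_int.const_mul m), integral_const_mul, hmZ, sub_self]
  set F : ℝ → ℝ := fun x => (x * (w x * r x) - m * (w x * r x)) - r m * (x * w x - m * w x)
  have hF_eq : ∀ x, F x = (x - m) * (r x - r m) * w x := fun x => by ring
  have hF_pos : ∀ x ≠ m, 0 < F x := by
    intro x hx
    rw [hF_eq]
    refine mul_pos ?_ (hw x)
    rcases hx.lt_or_gt with hlt | hlt
    · exact mul_pos_of_neg_of_neg (sub_neg.2 hlt) (sub_neg.2 (hr hlt))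
    · exact mul_pos (sub_pos.2 hlt) (sub_pos.2 (hr hlt))
  have hF_nonneg : ∀ x, 0 ≤ F x := fun x => by
    rcases eq_or_ne x m with rfl | hx
    · rw [hF_eq, sub_self, zero_mul, zero_mul]
    · exact (hF_pos x hx).le
  have hF_int : Integrable F μ := hxwr_centered.sub (hxw_centered.const_mul _)
  have hF_integral : ∫ x, F x ∂μ = ∫ x, x * (w x * r x) ∂μ - m * ∫ x, w x * r x ∂μ := by
    rw [integral_sub hxwr_centered (hxw_centered.const_mul _), integral_const_mul, hcentered,
      mul_zero, sub_zero, integral_sub hxwr_int (hwr_int.const_mul m), integral_const_mul]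
  have hF_integral_pos : 0 < ∫ x, F x ∂μ := by
    rw [integral_pos_iff_support_of_nonneg hF_nonneg hF_int]
    refine pos_iff_ne_zero.2 fun h => hμ m (measure_mono_null (fun x hx => ?_) h)
    exact (hF_pos x hx).ne'
  rw [hF_integral] at hF_integral_pos
  rw [hmZ]
  nlinarith [mul_pos hZ hF_integral_pos]

section GaussianWeight

variable {μ : Measure ℝ} {γ : ℝ}

lemma exp_mul_sub_sq_le (hγ : 0 < γ) (a x : ℝ) :
    exp (a * x - γ / 2 * x ^ 2) ≤ exp (a ^ 2 / (2 * γ)) := by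
  rw [exp_le_exp, ← sub_nonneg]
  have h : a ^ 2 / (2 * γ) - (a * x - γ / 2 * x ^ 2) = (a - γ * x) ^ 2 / (2 * γ) := by
    field_simp; ring
  rw [h]; positivity

lemma integrable_exp_mul_sub_sq [IsFiniteMeasure μ] (hγ : 0 < γ) (a : ℝ) :
    Integrable (fun x => exp (a * x - γ / 2 * x ^ 2)) μ :=
  .of_bound (by fun_prop) _ <| ae_of_all _ fun x => by
    rw [norm_of_nonneg (exp_pos _).le]
    exact exp_mul_sub_sq_le hγ a x

lemma integrable_mul_exp_mul_sub_sq [IsFiniteMeasure μ] (hγ : 0 < γ) (a : ℝ) :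
    Integrable (fun x => x * exp (a * x - γ / 2 * x ^ 2)) μ := by
  refine ((integrable_exp_mul_sub_sq hγ (a + 1)).add (integrable_exp_mul_sub_sq hγ (a - 1))).mono'
    (by fun_prop) (ae_of_all _ fun x => ?_)
  rw [norm_mul, norm_of_nonneg (exp_pos _).le, Real.norm_eq_abs]
  calc |x| * exp (a * x - γ / 2 * x ^ 2)
      ≤ (exp x + exp (-x)) * exp (a * x - γ / 2 * x ^ 2) := by
        gcongr
        linarith [add_one_le_exp |x|, exp_abs_le x]
    _ = exp ((a + 1) * x - γ / 2 * x ^ 2) + exp ((a - 1) * x - γ / 2 * x ^ 2) := by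
        rw [add_mul, ← exp_add, ← exp_add]; ring_nf

lemma tilt_eq_tilted [IsFiniteMeasure μ] [NeZero μ] (hγ : 0 < γ) (a : ℝ) :
    tilt μ a γ = μ.tilted fun x => a * x - γ / 2 * x ^ 2 := by
  have hZ := integral_exp_pos (integrable_exp_mul_sub_sq (μ := μ) hγ a)
  unfold tilt _root_.cgf Measure.tilted
  simp_rw [exp_sub _ (log _), exp_log hZ]

lemma tiltMean_eq_div [IsFiniteMeasure μ] [NeZero μ] (hγ : 0 < γ) (a : ℝ) :
    tiltMean μ a γ =
      (∫ x, x * exp (a * x - γ / 2 * x ^ 2) ∂μ) / ∫ x, exp (a * x - γ / 2 * x ^ 2) ∂μ := by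
  rw [tiltMean, tilt_eq_tilted hγ, integral_tilted, ← integral_div]
  simp_rw [smul_eq_mul]
  congr 1 with x
  ring

end GaussianWeight

/-- for a probability measure `π` on `ℝ` with `inf supp(π) < 0 < sup supp(π)`
and `γ₂ > 0`, the map `γ₁ ↦ ∫ x dπ^{(γ₁,γ₂)}(x)` is strictly increasing on `ℝ`. -/
theorem stmt1 (pr : Measure ℝ) [IsProbabilityMeasure pr]
    (hneg : ∃ x ∈ msupp pr, x < 0) (hpos : ∃ x ∈ msupp pr, 0 < x)
    (γ₂ : ℝ) (hγ₂ : 0 < γ₂) :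
    StrictMono (fun γ₁ => tiltMean pr γ₁ γ₂) := by
  intro a b hab
  obtain ⟨x, hx, hx0⟩ := hneg
  obtain ⟨y, hy, hy0⟩ := hpos
  have hsplit : ∀ x, exp (b * x - γ₂ / 2 * x ^ 2) =
      exp (a * x - γ₂ / 2 * x ^ 2) * exp ((b - a) * x) := fun x => by
    rw [← exp_add]; ring_nf
  dsimp only
  rw [tiltMean_eq_div hγ₂, tiltMean_eq_div hγ₂,
    div_lt_div_iff₀ (integral_exp_pos (integrable_exp_mul_sub_sq hγ₂ a))
      (integral_exp_pos (integrable_exp_mul_sub_sq hγ₂ b))]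
  simp_rw [hsplit]
  refine integral_mul_lt_of_strictMono (fun _ => exp_pos _)
    (fun u v huv => exp_lt_exp.2 (mul_lt_mul_of_pos_left huv (sub_pos.2 hab)))
    (integrable_exp_mul_sub_sq hγ₂ a) (integrable_mul_exp_mul_sub_sq hγ₂ a)
    (by simpa only [hsplit] using integrable_exp_mul_sub_sq hγ₂ b)
    (by simpa only [hsplit] using integrable_mul_exp_mul_sub_sq hγ₂ b)
    (measure_compl_singleton_ne_zero_of_mem_msupp hx hy (hx0.trans hy0).ne)
end

section
/- Let π be a probability measure on ℝ with inf supp(π) < 0 < sup supp(π), and fix γ₂ > 0. For every u ∈ (m(π), M(π)) there exists a unique h ∈ ℝ such that the mean of the tilted measure π^{(h,γ₂)} equals u, i.e. ∫ x dπ^{(h,γ₂)}(x) = u. -/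
open MeasureTheory ProbabilityTheory Filter Set

namespace Stmt2Aux

/-- normalization constant -/
noncomputable def Z (pr : Measure ℝ) (γ₂ h : ℝ) : ℝ :=
  ∫ x, Real.exp (h * x - γ₂ / 2 * x ^ 2) ∂pr

/-- unnormalized mean -/
noncomputable def N (pr : Measure ℝ) (γ₂ h : ℝ) : ℝ :=
  ∫ x, x * Real.exp (h * x - γ₂ / 2 * x ^ 2) ∂pr

lemma exp_arg_le {γ₂ : ℝ} (hγ₂ : 0 < γ₂) (h x : ℝ) :
    h * x - γ₂ / 2 * x ^ 2 ≤ h ^ 2 / (2 * γ₂) := by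
  rw [le_div_iff₀ (by positivity)]
  nlinarith [sq_nonneg (γ₂ * x - h)]

lemma cont_fx (γ₂ h : ℝ) : Continuous fun x : ℝ => Real.exp (h * x - γ₂ / 2 * x ^ 2) := by
  fun_prop

lemma f_le {γ₂ : ℝ} (hγ₂ : 0 < γ₂) (h x : ℝ) :
    Real.exp (h * x - γ₂ / 2 * x ^ 2) ≤ Real.exp (h ^ 2 / (2 * γ₂)) :=
  Real.exp_le_exp.2 (exp_arg_le hγ₂ h x)

lemma integrable_f (pr : Measure ℝ) [IsProbabilityMeasure pr] {γ₂ : ℝ} (hγ₂ : 0 < γ₂) (h : ℝ) :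
    Integrable (fun x => Real.exp (h * x - γ₂ / 2 * x ^ 2)) pr := by
  refine (integrable_const (Real.exp (h ^ 2 / (2 * γ₂)))).mono'
    (cont_fx γ₂ h).aestronglyMeasurable (ae_of_all _ fun x => ?_)
  rw [Real.norm_eq_abs, Real.abs_exp]
  exact f_le hγ₂ h x

lemma abs_le_exps (x : ℝ) : |x| ≤ Real.exp x + Real.exp (-x) := by
  rcases le_total 0 x with hx | hx
  · rw [abs_of_nonneg hx]
    have := Real.add_one_le_exp x
    have := Real.exp_pos (-x)
    linarith
  · rw [abs_of_nonpos hx]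
    have := Real.add_one_le_exp (-x)
    have := Real.exp_pos x
    linarith

lemma xf_bound {γ₂ : ℝ} (hγ₂ : 0 < γ₂) (h x : ℝ) :
    |x * Real.exp (h * x - γ₂ / 2 * x ^ 2)| ≤
      Real.exp ((h + 1) ^ 2 / (2 * γ₂)) + Real.exp ((h - 1) ^ 2 / (2 * γ₂)) := by
  rw [abs_mul, Real.abs_exp]
  calc |x| * Real.exp (h * x - γ₂ / 2 * x ^ 2)
      ≤ (Real.exp x + Real.exp (-x)) * Real.exp (h * x - γ₂ / 2 * x ^ 2) :=
        mul_le_mul_of_nonneg_right (abs_le_exps x) (Real.exp_pos _).le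
    _ = Real.exp ((h + 1) * x - γ₂ / 2 * x ^ 2) + Real.exp ((h - 1) * x - γ₂ / 2 * x ^ 2) := by
        rw [show (h + 1) * x - γ₂ / 2 * x ^ 2 = x + (h * x - γ₂ / 2 * x ^ 2) by ring,
          show (h - 1) * x - γ₂ / 2 * x ^ 2 = -x + (h * x - γ₂ / 2 * x ^ 2) by ring,
          Real.exp_add, Real.exp_add]
        ring
    _ ≤ _ := add_le_add (f_le hγ₂ _ x) (f_le hγ₂ _ x)

lemma integrable_xf (pr : Measure ℝ) [IsProbabilityMeasure pr] {γ₂ : ℝ} (hγ₂ : 0 < γ₂) (h : ℝ) :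
    Integrable (fun x => x * Real.exp (h * x - γ₂ / 2 * x ^ 2)) pr := by
  refine (integrable_const (Real.exp ((h + 1) ^ 2 / (2 * γ₂)) +
    Real.exp ((h - 1) ^ 2 / (2 * γ₂)))).mono'
    ((continuous_id.mul (cont_fx γ₂ h)).aestronglyMeasurable) (ae_of_all _ fun x => ?_)
  rw [Real.norm_eq_abs]
  exact xf_bound hγ₂ h x

lemma Z_pos (pr : Measure ℝ) [IsProbabilityMeasure pr] {γ₂ : ℝ} (hγ₂ : 0 < γ₂) (h : ℝ) :
    0 < Z pr γ₂ h :=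
  integral_exp_pos (integrable_f pr hγ₂ h)

lemma tiltMean_eq (pr : Measure ℝ) [IsProbabilityMeasure pr] {γ₂ : ℝ} (hγ₂ : 0 < γ₂) (h : ℝ) :
    tiltMean pr h γ₂ = N pr γ₂ h / Z pr γ₂ h := by
  have hZ := Z_pos pr hγ₂ h
  have hZ' : 0 < ∫ x, Real.exp (h * x - γ₂ / 2 * x ^ 2) ∂pr := hZ
  have htilt : tilt pr h γ₂ = pr.tilted (fun x => h * x - γ₂ / 2 * x ^ 2) := by
    unfold tilt Measure.tilted _root_.cgf
    congr 1
    funext x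
    rw [Real.exp_sub, Real.exp_log hZ']
  rw [tiltMean, htilt, integral_tilted]
  simp only [smul_eq_mul]
  calc ∫ x, (Real.exp (h * x - γ₂ / 2 * x ^ 2) / ∫ x, Real.exp (h * x - γ₂ / 2 * x ^ 2) ∂pr) * x ∂pr
      = ∫ x, (x * Real.exp (h * x - γ₂ / 2 * x ^ 2)) / Z pr γ₂ h ∂pr := by
        simp only [Z]; congr 1; funext x; ring
    _ = N pr γ₂ h / Z pr γ₂ h := by rw [integral_div]; rfl

lemma exp_sq_div_mono {γ₂ : ℝ} (hγ₂ : 0 < γ₂) {s t : ℝ} (h : |s| ≤ t) :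
    Real.exp (s ^ 2 / (2 * γ₂)) ≤ Real.exp (t ^ 2 / (2 * γ₂)) := by
  apply Real.exp_le_exp.2
  have hs : s ^ 2 ≤ t ^ 2 := sq_le_sq' (abs_le.1 h).1 (abs_le.1 h).2
  exact div_le_div_of_nonneg_right hs (by positivity : (0:ℝ) ≤ 2 * γ₂)

lemma abs_near {h0 h : ℝ} (hh : h ∈ Metric.closedBall h0 1) : |h| ≤ |h0| + 1 := by
  have hd : |h - h0| ≤ 1 := by simpa [Real.dist_eq] using hh
  calc |h| = |h - h0 + h0| := by ring_nf
    _ ≤ |h - h0| + |h0| := abs_add_le _ _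
    _ ≤ |h0| + 1 := by linarith

lemma cont_Z (pr : Measure ℝ) [IsProbabilityMeasure pr] {γ₂ : ℝ} (hγ₂ : 0 < γ₂) :
    Continuous fun h => Z pr γ₂ h := by
  rw [continuous_iff_continuousAt]
  intro h0
  simp only [Z]
  apply continuousAt_of_dominated (bound := fun _ => Real.exp ((|h0| + 1) ^ 2 / (2 * γ₂)))
  · exact Eventually.of_forall fun h => (cont_fx γ₂ h).aestronglyMeasurable
  · filter_upwards [Metric.closedBall_mem_nhds h0 zero_lt_one] with h hh
    refine ae_of_all _ fun x => ?_
    rw [Real.norm_eq_abs, Real.abs_exp]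
    exact (f_le hγ₂ h x).trans (exp_sq_div_mono hγ₂ (abs_near hh))
  · exact integrable_const _
  · exact ae_of_all _ fun x => (by fun_prop : Continuous fun h : ℝ =>
      Real.exp (h * x - γ₂ / 2 * x ^ 2)).continuousAt

lemma cont_N (pr : Measure ℝ) [IsProbabilityMeasure pr] {γ₂ : ℝ} (hγ₂ : 0 < γ₂) :
    Continuous fun h => N pr γ₂ h := by
  rw [continuous_iff_continuousAt]
  intro h0
  simp only [N]
  apply continuousAt_of_dominated
    (bound := fun _ => Real.exp ((|h0| + 2) ^ 2 / (2 * γ₂)) + Real.exp ((|h0| + 2) ^ 2 / (2 * γ₂)))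
  · exact Eventually.of_forall fun h =>
      (continuous_id.mul (cont_fx γ₂ h)).aestronglyMeasurable
  · filter_upwards [Metric.closedBall_mem_nhds h0 zero_lt_one] with h hh
    refine ae_of_all _ fun x => ?_
    rw [Real.norm_eq_abs]
    have habs := abs_near hh
    refine (xf_bound hγ₂ h x).trans (add_le_add ?_ ?_) <;>
      apply exp_sq_div_mono hγ₂ <;>
      [exact (abs_add_le h 1).trans (by simp; linarith);
       exact (abs_sub h 1).trans (by simp; linarith)]
  · exact integrable_const _
  · exact ae_of_all _ fun x => (by fun_prop : Continuous fun h : ℝ =>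
      x * Real.exp (h * x - γ₂ / 2 * x ^ 2)).continuousAt

set_option maxHeartbeats 1000000 in
lemma key_lt (pr : Measure ℝ) [IsProbabilityMeasure pr] {γ₂ : ℝ} (hγ₂ : 0 < γ₂)
    {a b : ℝ} (ha : a ∈ msupp pr) (hb : b ∈ msupp pr) (hab : a < b)
    {h₁ h₂ : ℝ} (h12 : h₁ < h₂) :
    N pr γ₂ h₁ * Z pr γ₂ h₂ < N pr γ₂ h₂ * Z pr γ₂ h₁ := by
  set d := h₂ - h₁ with hd
  have hdpos : 0 < d := by simp [hd]; linarith
  set f₁ : ℝ → ℝ := fun x => Real.exp (h₁ * x - γ₂ / 2 * x ^ 2) with hf₁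
  set f₂ : ℝ → ℝ := fun x => Real.exp (h₂ * x - γ₂ / 2 * x ^ 2) with hf₂
  have hsplit : ∀ t : ℝ, f₂ t = f₁ t * Real.exp (d * t) := by
    intro t
    simp only [hf₁, hf₂, ← Real.exp_add]
    congr 1
    rw [hd]; ring
  set g : ℝ × ℝ → ℝ :=
    fun p => (p.2 - p.1) * (f₁ p.1 * f₁ p.2 * (Real.exp (d * p.2) - Real.exp (d * p.1))) with hg
  have hgexpand : ∀ p : ℝ × ℝ, g p =
      f₁ p.1 * (p.2 * f₂ p.2) - f₂ p.1 * (p.2 * f₁ p.2)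
        - ((p.1 * f₁ p.1) * f₂ p.2 - (p.1 * f₂ p.1) * f₁ p.2) := by
    intro p
    rw [hg, hsplit p.1, hsplit p.2]
    ring
  have if1 : Integrable f₁ pr := integrable_f pr hγ₂ h₁
  have if2 : Integrable f₂ pr := integrable_f pr hγ₂ h₂
  have ixf1 : Integrable (fun x => x * f₁ x) pr := integrable_xf pr hγ₂ h₁
  have ixf2 : Integrable (fun x => x * f₂ x) pr := integrable_xf pr hγ₂ h₂
  have iA : Integrable (fun p : ℝ × ℝ => f₁ p.1 * (p.2 * f₂ p.2)) (pr.prod pr) :=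
    if1.mul_prod ixf2
  have iB : Integrable (fun p : ℝ × ℝ => f₂ p.1 * (p.2 * f₁ p.2)) (pr.prod pr) :=
    if2.mul_prod ixf1
  have iC : Integrable (fun p : ℝ × ℝ => (p.1 * f₁ p.1) * f₂ p.2) (pr.prod pr) :=
    ixf1.mul_prod if2
  have iD : Integrable (fun p : ℝ × ℝ => (p.1 * f₂ p.1) * f₁ p.2) (pr.prod pr) :=
    ixf2.mul_prod if1
  have hgInt : Integrable g (pr.prod pr) := by
    have : Integrable (fun p : ℝ × ℝ =>
        f₁ p.1 * (p.2 * f₂ p.2) - f₂ p.1 * (p.2 * f₁ p.2)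
          - ((p.1 * f₁ p.1) * f₂ p.2 - (p.1 * f₂ p.1) * f₁ p.2)) (pr.prod pr) :=
      (iA.sub iB).sub (iC.sub iD)
    exact this.congr (ae_of_all _ fun p => (hgexpand p).symm)
  have hintg : ∫ p, g p ∂(pr.prod pr) =
      2 * (N pr γ₂ h₂ * Z pr γ₂ h₁ - N pr γ₂ h₁ * Z pr γ₂ h₂) := by
    have : ∫ p, g p ∂(pr.prod pr) = ∫ p : ℝ × ℝ,
        (f₁ p.1 * (p.2 * f₂ p.2) - f₂ p.1 * (p.2 * f₁ p.2)
          - ((p.1 * f₁ p.1) * f₂ p.2 - (p.1 * f₂ p.1) * f₁ p.2)) ∂(pr.prod pr) := by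
      exact integral_congr_ae (ae_of_all _ hgexpand)
    have iAB : Integrable (fun p : ℝ × ℝ =>
        f₁ p.1 * (p.2 * f₂ p.2) - f₂ p.1 * (p.2 * f₁ p.2)) (pr.prod pr) := iA.sub iB
    have iCD : Integrable (fun p : ℝ × ℝ =>
        (p.1 * f₁ p.1) * f₂ p.2 - (p.1 * f₂ p.1) * f₁ p.2) (pr.prod pr) := iC.sub iD
    rw [this, integral_sub iAB iCD, integral_sub iA iB, integral_sub iC iD,
      integral_prod_mul f₁ (fun y => y * f₂ y), integral_prod_mul f₂ (fun y => y * f₁ y),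
      integral_prod_mul (fun x => x * f₁ x) f₂, integral_prod_mul (fun x => x * f₂ x) f₁]
    simp only [N, Z, hf₁, hf₂]
    ring
  have prod_nonneg' : ∀ s t : ℝ, s ≤ 0 → t ≤ 0 → 0 ≤ s * t := fun s t hs ht => by nlinarith
  have hg_nonneg : ∀ p : ℝ × ℝ, 0 ≤ g p := by
    intro p
    simp only [hg]
    rcases le_total p.1 p.2 with hle | hle
    · apply mul_nonneg (by linarith)
      apply mul_nonneg (by positivity)
      have : Real.exp (d * p.1) ≤ Real.exp (d * p.2) :=
        Real.exp_le_exp.2 (mul_le_mul_of_nonneg_left hle hdpos.le)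
      linarith
    · have h2 : f₁ p.1 * f₁ p.2 * (Real.exp (d * p.2) - Real.exp (d * p.1)) ≤ 0 := by
        apply mul_nonpos_of_nonneg_of_nonpos (by positivity)
        have : Real.exp (d * p.2) ≤ Real.exp (d * p.1) :=
          Real.exp_le_exp.2 (mul_le_mul_of_nonneg_left hle hdpos.le)
        linarith
      exact prod_nonneg' _ _ (by linarith) h2
  -- lower bound on a product of balls
  set r := (b - a) / 4 with hr
  have hrpos : 0 < r := by rw [hr]; linarith
  set A := Metric.ball a r with hA
  set B := Metric.ball b r with hB
  have hAne : pr A ≠ 0 := ha _ (Metric.ball_mem_nhds a hrpos)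
  have hBne : pr B ≠ 0 := hb _ (Metric.ball_mem_nhds b hrpos)
  set R := max |a| |b| + r with hR
  have arith : ∀ t s : ℝ, -(|h₁| * s) ≤ h₁ * t → t ^ 2 ≤ s ^ 2 →
      -(|h₁| * s) - γ₂ / 2 * s ^ 2 ≤ h₁ * t - γ₂ / 2 * t ^ 2 := by
    intro t s h1 h2
    nlinarith [mul_le_mul_of_nonneg_left h2 (by positivity : (0:ℝ) ≤ γ₂ / 2)]
  have hm1 : ∀ t : ℝ, |t| ≤ R → Real.exp (-(|h₁| * R) - γ₂ / 2 * R ^ 2) ≤ f₁ t := by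
    intro t ht
    rw [hf₁]
    apply Real.exp_le_exp.2
    have h1 : -(|h₁| * R) ≤ h₁ * t := by
      have : |h₁ * t| ≤ |h₁| * R := by
        rw [abs_mul]
        exact mul_le_mul_of_nonneg_left ht (abs_nonneg _)
      linarith [(abs_le.1 this).1]
    have h2 : t ^ 2 ≤ R ^ 2 := sq_le_sq' (by linarith [(abs_le.1 ht).1]) (abs_le.1 ht).2
    exact arith t R h1 h2
  set m₁ := Real.exp (-(|h₁| * R) - γ₂ / 2 * R ^ 2) with hm₁
  set m₂ := Real.exp (d * (b - r)) - Real.exp (d * (a + r)) with hm₂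
  have hm₂pos : 0 < m₂ := by
    rw [hm₂, sub_pos]
    apply Real.exp_lt_exp.2
    have : a + r < b - r := by rw [hr]; linarith
    exact mul_lt_mul_of_pos_left this hdpos
  set κ := (b - a) / 2 * (m₁ * m₁ * m₂) with hκ
  have hκpos : 0 < κ := by
    rw [hκ]
    have : 0 < m₁ := Real.exp_pos _
    have : (0:ℝ) < b - a := by linarith
    positivity
  have hbound : ∀ p ∈ A ×ˢ B, κ ≤ g p := by
    rintro ⟨x, y⟩ ⟨hx, hy⟩
    simp only [hA, Metric.mem_ball, Real.dist_eq] at hx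
    simp only [hB, Metric.mem_ball, Real.dist_eq] at hy
    have hx1 : a - r < x := by linarith [(abs_lt.1 hx).1]
    have hx2 : x < a + r := by linarith [(abs_lt.1 hx).2]
    have hy1 : b - r < y := by linarith [(abs_lt.1 hy).1]
    have hy2 : y < b + r := by linarith [(abs_lt.1 hy).2]
    have hxR : |x| ≤ R := by
      rw [abs_le, hR]
      constructor
      · have := neg_abs_le a; have := le_max_left |a| |b|; linarith
      · have := le_abs_self a; have := le_max_left |a| |b|; linarith
    have hyR : |y| ≤ R := by
      rw [abs_le, hR]
      constructor
      · have := neg_abs_le b; have := le_max_right |a| |b|; linarith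
      · have := le_abs_self b; have := le_max_right |a| |b|; linarith
    have hyx : (b - a) / 2 ≤ y - x := by linarith
    have hf1x := hm1 x hxR
    have hf1y := hm1 y hyR
    have hexp : m₂ ≤ Real.exp (d * y) - Real.exp (d * x) := by
      rw [hm₂]
      have e1 : Real.exp (d * (b - r)) ≤ Real.exp (d * y) :=
        Real.exp_le_exp.2 (mul_le_mul_of_nonneg_left (by linarith) hdpos.le)
      have e2 : Real.exp (d * x) ≤ Real.exp (d * (a + r)) :=
        Real.exp_le_exp.2 (mul_le_mul_of_nonneg_left (by linarith) hdpos.le)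
      linarith
    simp only [hg, hκ]
    have hm₁pos : 0 < m₁ := Real.exp_pos _
    have hinner : m₁ * m₁ * m₂ ≤ f₁ x * f₁ y * (Real.exp (d * y) - Real.exp (d * x)) := by
      apply mul_le_mul (mul_le_mul hf1x hf1y hm₁pos.le (by positivity)) hexp hm₂pos.le
        (by positivity)
    apply mul_le_mul hyx hinner (by positivity) (by linarith)
  have hs_meas : MeasurableSet (A ×ˢ B) :=
    measurableSet_ball.prod measurableSet_ball
  have hsetpos : 0 < ((pr.prod pr) (A ×ˢ B)).toReal := by
    apply ENNReal.toReal_pos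
    · rw [Measure.prod_prod]
      exact mul_ne_zero hAne hBne
    · exact measure_ne_top _ _
  have hlow : κ * ((pr.prod pr) (A ×ˢ B)).toReal ≤ ∫ p in A ×ˢ B, g p ∂(pr.prod pr) :=
    setIntegral_ge_of_const_le_real hs_meas (measure_ne_top _ _) hbound hgInt.integrableOn
  have hle : ∫ p in A ×ˢ B, g p ∂(pr.prod pr) ≤ ∫ p, g p ∂(pr.prod pr) :=
    setIntegral_le_integral hgInt (ae_of_all _ hg_nonneg)
  have : 0 < ∫ p, g p ∂(pr.prod pr) := by
    have := mul_pos hκpos hsetpos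
    linarith
  rw [hintg] at this
  linarith

set_option maxHeartbeats 1000000 in
lemma exists_gt (μ : Measure ℝ) [IsProbabilityMeasure μ] {γ₂ : ℝ} (hγ₂ : 0 < γ₂)
    {x0 u : ℝ} (hx0 : x0 ∈ msupp μ) (hu : u < x0) :
    ∃ h : ℝ, u * Z μ γ₂ h < N μ γ₂ h := by
  set ε := (x0 - u) / 3 with hε
  have hεpos : 0 < ε := by rw [hε]; linarith
  set a := u + ε with ha
  set R := |x0| + ε with hR
  set B' := Metric.ball x0 ε with hB'
  have hpB : μ B' ≠ 0 := hx0 _ (Metric.ball_mem_nhds x0 hεpos)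
  set p := (μ B').toReal with hp
  have hppos : 0 < p := ENNReal.toReal_pos hpB (measure_ne_top _ _)
  set h := max 1 ((γ₂ / 2 * R ^ 2 - 1 - Real.log (ε * p)) / ε) with hh
  have hh1 : 1 ≤ h := le_max_left _ _
  have hhε : γ₂ / 2 * R ^ 2 - 1 - Real.log (ε * p) ≤ h * ε := by
    have h1 : (γ₂ / 2 * R ^ 2 - 1 - Real.log (ε * p)) / ε ≤ h := le_max_right _ _
    have h2 := mul_le_mul_of_nonneg_right h1 hεpos.le
    rwa [div_mul_cancel₀ _ hεpos.ne'] at h2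
  have hkey : Real.exp (γ₂ / 2 * R ^ 2 - 1 - h * ε) ≤ ε * p := by
    rw [← Real.exp_log (by positivity : (0:ℝ) < ε * p)]
    exact Real.exp_le_exp.2 (by linarith)
  set f := fun x : ℝ => Real.exp (h * x - γ₂ / 2 * x ^ 2) with hf
  have hif : Integrable f μ := integrable_f μ hγ₂ h
  have hixf : Integrable (fun x => x * f x) μ := integrable_xf μ hγ₂ h
  have hI : Integrable (fun x => (x - a) * f x) μ := by
    have e : (fun x => (x - a) * f x) = fun x => x * f x - a * f x := funext fun x => by ring
    rw [e]; exact hixf.sub (hif.const_mul a)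
  set C := Real.exp (h * a - 1) with hC
  have hCpos : 0 < C := Real.exp_pos _
  have hlow : ∀ x : ℝ, -C ≤ (x - a) * f x := by
    intro x
    rcases le_total x a with hxa | hxa
    · have e1 : a - x ≤ Real.exp (a - 1 - x) := by
        have := Real.add_one_le_exp (a - 1 - x); linarith
      have e2 : (a - x) * f x ≤ Real.exp (a - 1 - x) * f x :=
        mul_le_mul_of_nonneg_right e1 (Real.exp_pos _).le
      have e3 : Real.exp (a - 1 - x) * f x = Real.exp (a - 1 - x + (h * x - γ₂ / 2 * x ^ 2)) := by
        rw [hf, ← Real.exp_add]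
      have e4 : a - 1 - x + (h * x - γ₂ / 2 * x ^ 2) ≤ h * a - 1 := by
        nlinarith [mul_nonneg (sub_nonneg.2 hh1) (sub_nonneg.2 hxa),
          mul_nonneg hγ₂.le (sq_nonneg x)]
      have e5 : (a - x) * f x ≤ C := by
        rw [hC]
        calc (a - x) * f x ≤ Real.exp (a - 1 - x) * f x := e2
          _ = Real.exp (a - 1 - x + (h * x - γ₂ / 2 * x ^ 2)) := e3
          _ ≤ Real.exp (h * a - 1) := Real.exp_le_exp.2 e4
      have e6 : (x - a) * f x = -((a - x) * f x) := by ring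
      linarith
    · have e7 : 0 ≤ (x - a) * f x := mul_nonneg (by linarith) (Real.exp_pos _).le
      linarith
  have hball : ∀ x ∈ B', ε * Real.exp (h * (x0 - ε) - γ₂ / 2 * R ^ 2) ≤ (x - a) * f x := by
    intro x hx
    simp only [hB', Metric.mem_ball, Real.dist_eq] at hx
    have hx1 : x0 - ε < x := by linarith [(abs_lt.1 hx).1]
    have hx2 : x < x0 + ε := by linarith [(abs_lt.1 hx).2]
    have hxa : ε ≤ x - a := by
      rw [ha]; rw [hε] at hx1 ⊢; linarith
    have hfx : Real.exp (h * (x0 - ε) - γ₂ / 2 * R ^ 2) ≤ f x := by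
      rw [hf]
      apply Real.exp_le_exp.2
      have h1 : h * (x0 - ε) ≤ h * x := mul_le_mul_of_nonneg_left (by linarith)
        (by linarith : (0:ℝ) ≤ h)
      have hxR : |x| ≤ R := by
        rw [hR, abs_le]
        constructor
        · linarith [neg_abs_le x0]
        · linarith [le_abs_self x0]
      have h2 : x ^ 2 ≤ R ^ 2 := sq_le_sq' (abs_le.1 hxR).1 (abs_le.1 hxR).2
      have h3 := mul_le_mul_of_nonneg_left h2 (by positivity : (0:ℝ) ≤ γ₂ / 2)
      linarith
    exact mul_le_mul hxa hfx (Real.exp_pos _).le (by linarith)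
  have hmeas : MeasurableSet B' := Metric.isOpen_ball.measurableSet
  have hsplit : ∫ x, (x - a) * f x ∂μ =
      (∫ x in B', (x - a) * f x ∂μ) + ∫ x in B'ᶜ, (x - a) * f x ∂μ :=
    (integral_add_compl hmeas hI).symm
  have hin : ε * Real.exp (h * (x0 - ε) - γ₂ / 2 * R ^ 2) * p ≤ ∫ x in B', (x - a) * f x ∂μ :=
    setIntegral_ge_of_const_le_real hmeas (measure_ne_top _ _) hball hI.integrableOn
  have hout : -C ≤ ∫ x in B'ᶜ, (x - a) * f x ∂μ := by
    have h1 := setIntegral_ge_of_const_le_real hmeas.compl (measure_ne_top _ _)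
      (fun x _ => hlow x) hI.integrableOn
    rw [measureReal_def] at h1
    have h2 : (μ B'ᶜ).toReal ≤ 1 := by
      have hμ := prob_le_one (μ := μ) (s := B'ᶜ)
      simpa using ENNReal.toReal_mono ENNReal.one_ne_top hμ
    have h3 : C * (μ B'ᶜ).toReal ≤ C := mul_le_of_le_one_right hCpos.le h2
    nlinarith [h1, h3]
  have hCle : C ≤ ε * Real.exp (h * (x0 - ε) - γ₂ / 2 * R ^ 2) * p := by
    have hfin : C = Real.exp (γ₂ / 2 * R ^ 2 - 1 - h * ε) *
        Real.exp (h * (x0 - ε) - γ₂ / 2 * R ^ 2) := by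
      rw [hC, ← Real.exp_add]
      congr 1
      rw [ha, hε]
      ring
    rw [hfin]
    calc Real.exp (γ₂ / 2 * R ^ 2 - 1 - h * ε) * Real.exp (h * (x0 - ε) - γ₂ / 2 * R ^ 2)
        ≤ (ε * p) * Real.exp (h * (x0 - ε) - γ₂ / 2 * R ^ 2) :=
          mul_le_mul_of_nonneg_right hkey (Real.exp_pos _).le
      _ = ε * Real.exp (h * (x0 - ε) - γ₂ / 2 * R ^ 2) * p := by ring
  have hInt_nonneg : 0 ≤ ∫ x, (x - a) * f x ∂μ := by rw [hsplit]; linarith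
  have hNZ : ∫ x, (x - a) * f x ∂μ = N μ γ₂ h - a * Z μ γ₂ h := by
    have e : (fun x => (x - a) * f x) = fun x => x * f x - a * f x := funext fun x => by ring
    rw [e, integral_sub hixf (hif.const_mul a), integral_const_mul]
    simp only [N, Z, hf]
  have hZpos := Z_pos μ hγ₂ h
  refine ⟨h, ?_⟩
  have hua : u * Z μ γ₂ h = a * Z μ γ₂ h - ε * Z μ γ₂ h := by rw [ha]; ring
  nlinarith [mul_pos hεpos hZpos]

lemma msupp_neg (μ : Measure ℝ) {x : ℝ} (hx : x ∈ msupp μ) :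
    -x ∈ msupp (Measure.map Neg.neg μ) := by
  intro U hU
  have h1 : interior U ∈ nhds (-x) := interior_mem_nhds.2 hU
  have h2 : (Neg.neg ⁻¹' interior U : Set ℝ) ∈ nhds x := by
    have hc : ContinuousAt (Neg.neg : ℝ → ℝ) x := continuous_neg.continuousAt
    exact hc.preimage_mem_nhds h1
  intro h0
  apply hx _ h2
  have hmap : Measure.map Neg.neg μ (interior U) = μ (Neg.neg ⁻¹' interior U) :=
    Measure.map_apply measurable_neg isOpen_interior.measurableSet
  rw [← hmap]
  exact measure_mono_null interior_subset h0

lemma Z_neg_map (pr : Measure ℝ) [IsProbabilityMeasure pr] (γ₂ h : ℝ) :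
    Z (Measure.map Neg.neg pr) γ₂ h = Z pr γ₂ (-h) := by
  simp only [Z]
  rw [integral_map measurable_neg.aemeasurable (cont_fx γ₂ h).aestronglyMeasurable]
  congr 1
  funext x
  congr 1
  ring

lemma N_neg_map (pr : Measure ℝ) [IsProbabilityMeasure pr] (γ₂ h : ℝ) :
    N (Measure.map Neg.neg pr) γ₂ h = -N pr γ₂ (-h) := by
  simp only [N]
  rw [integral_map measurable_neg.aemeasurable
    ((by fun_prop : Continuous fun x : ℝ => x * Real.exp (h * x - γ₂ / 2 * x ^ 2)).aestronglyMeasurable)]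
  rw [← integral_neg]
  congr 1
  funext x
  have : (-x : ℝ) * Real.exp (h * -x - γ₂ / 2 * (-x) ^ 2)
      = -(x * Real.exp (-h * x - γ₂ / 2 * x ^ 2)) := by
    have : h * -x - γ₂ / 2 * (-x) ^ 2 = -h * x - γ₂ / 2 * x ^ 2 := by ring
    rw [this]; ring
  exact this

lemma exists_lt (pr : Measure ℝ) [IsProbabilityMeasure pr] {γ₂ : ℝ} (hγ₂ : 0 < γ₂)
    {x1 u : ℝ} (hx1 : x1 ∈ msupp pr) (hu : x1 < u) :
    ∃ h : ℝ, N pr γ₂ h < u * Z pr γ₂ h := by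
  have : IsProbabilityMeasure (Measure.map (Neg.neg : ℝ → ℝ) pr) :=
    Measure.isProbabilityMeasure_map measurable_neg.aemeasurable
  obtain ⟨h, hh⟩ := exists_gt (Measure.map Neg.neg pr) hγ₂ (msupp_neg pr hx1)
    (by linarith : -u < -x1)
  rw [Z_neg_map, N_neg_map] at hh
  exact ⟨-h, by linarith⟩

end Stmt2Aux


/-- for a probability measure `π` on `ℝ` with `inf supp(π) < 0 < sup supp(π)`
and `γ₂ > 0`, every `u ∈ (m(π), M(π))` (i.e. `u` has a support point strictly below it
and a support point strictly above it) is the mean of the tilted measure `π^{(h,γ₂)}`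
for a unique `h ∈ ℝ`. -/
theorem stmt2 (pr : Measure ℝ) [IsProbabilityMeasure pr]
    (hneg : ∃ x ∈ msupp pr, x < 0) (hpos : ∃ x ∈ msupp pr, 0 < x)
    (γ₂ : ℝ) (hγ₂ : 0 < γ₂) (u : ℝ)
    (hul : ∃ x ∈ msupp pr, x < u) (huu : ∃ x ∈ msupp pr, u < x) :
    ∃! h : ℝ, tiltMean pr h γ₂ = u := by
  classical
  obtain ⟨xa, hxa, hxau⟩ := hul
  obtain ⟨xb, hxb, hxbu⟩ := huu
  have hZpos : ∀ h : ℝ, 0 < Stmt2Aux.Z pr γ₂ h := fun h => Stmt2Aux.Z_pos pr hγ₂ h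
  have hFeq : ∀ h : ℝ, tiltMean pr h γ₂ = Stmt2Aux.N pr γ₂ h / Stmt2Aux.Z pr γ₂ h :=
    fun h => Stmt2Aux.tiltMean_eq pr hγ₂ h
  have hmono : StrictMono fun h => tiltMean pr h γ₂ := by
    intro h₁ h₂ h12
    simp only [hFeq]
    rw [div_lt_div_iff₀ (hZpos h₁) (hZpos h₂)]
    exact Stmt2Aux.key_lt pr hγ₂ hxa hxb (lt_trans hxau hxbu) h12
  have hcont : Continuous fun h => tiltMean pr h γ₂ := by
    have : (fun h => tiltMean pr h γ₂) =
        fun h => Stmt2Aux.N pr γ₂ h / Stmt2Aux.Z pr γ₂ h := funext hFeq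
    rw [this]
    exact (Stmt2Aux.cont_N pr hγ₂).div (Stmt2Aux.cont_Z pr hγ₂) fun h => (hZpos h).ne'
  obtain ⟨hlo, hhlo⟩ := Stmt2Aux.exists_lt pr hγ₂ hxa hxau
  obtain ⟨hhi, hhhi⟩ := Stmt2Aux.exists_gt pr hγ₂ hxb hxbu
  have hFlo : tiltMean pr hlo γ₂ < u := by
    rw [hFeq, div_lt_iff₀ (hZpos hlo)]
    linarith
  have hFhi : u < tiltMean pr hhi γ₂ := by
    rw [hFeq, lt_div_iff₀ (hZpos hhi)]
    linarith
  have hlohi : hlo < hhi := by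
    by_contra hcon
    push_neg at hcon
    have := hmono.le_iff_le.2 hcon
    linarith
  have hu_mem : u ∈ Icc (tiltMean pr hlo γ₂) (tiltMean pr hhi γ₂) := ⟨hFlo.le, hFhi.le⟩
  obtain ⟨h, _, hFh⟩ := intermediate_value_Icc hlohi.le hcont.continuousOn hu_mem
  have hFh' : tiltMean pr h γ₂ = u := hFh
  refine ⟨h, hFh', fun y hy => hmono.injective ?_⟩
  show tiltMean pr y γ₂ = tiltMean pr h γ₂
  rw [hy, hFh']
end

section
/- Let π be a probability measure on ℝ with inf supp(π) < 0 < sup supp(π), and fix d > 0. Then the function u ↦ G(u,d) is differentiable on (m(π), M(π)) and its derivative satisfies ∂G/∂u(u,d) = h(u,d) for every u ∈ (m(π), M(π)). -/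
/-! The cumulant generating function `γ ↦ c(γ, d)` is differentiable with derivative the tilted
mean, which is strictly increasing since its derivative is the variance of the tilted measure,
positive as soon as `π` is not a point mass. Hence `c` is convex and `h(·, d)` inverts `∂c/∂γ`,
so `G(·, d) - c(0, d)` is the Legendre transform of `c`. The tangent-line inequalities for `c` at
`h u` and `h w` squeeze `G(w) - G(u)` between `(w - u) h(u)` and `(w - u) h(w)`, and `h`, the
inverse of a strictly increasing function, is continuous. -/

open MeasureTheory ProbabilityTheory Filter Set

open Real Topology

section Legendre

variable {f g h : ℝ → ℝ}

lemma add_mul_sub_le_of_hasDerivAt_of_monotone (hf : ∀ x, HasDerivAt f (g x) x)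
    (hg : Monotone g) (x y : ℝ) : f x + g x * (y - x) ≤ f y := by
  have hderiv : deriv f = g := funext fun x => (hf x).deriv
  have hconv : ConvexOn ℝ univ f :=
    Monotone.convexOn_univ_of_deriv (fun x => (hf x).differentiableAt) (hderiv ▸ hg)
  rcases lt_trichotomy x y with hxy | rfl | hyx
  · have := hconv.le_slope_of_hasDerivAt (mem_univ x) (mem_univ y) hxy (hf x)
    rw [slope_def_field, le_div_iff₀ (sub_pos.2 hxy)] at this
    linarith
  · simp
  · have := hconv.slope_le_of_hasDerivAt (mem_univ y) (mem_univ x) hyx (hf x)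
    rw [slope_def_field, div_le_iff₀ (sub_pos.2 hyx)] at this
    linarith

lemma continuousAt_of_strictMono_of_eventually_comp_eq {u : ℝ} (hg : StrictMono g)
    (hgh : ∀ᶠ w in 𝓝 u, g (h w) = w) : ContinuousAt h u := by
  rw [Metric.continuousAt_iff]
  intro ε hε
  have hu : g (h u) = u := hgh.self_of_nhds
  have hlo : g (h u - ε) < u := (hg (sub_lt_self _ hε)).trans_eq hu
  have hhi : u < g (h u + ε) := hu.symm.trans_lt (hg (lt_add_of_pos_right _ hε))
  obtain ⟨δ, hδ, hball⟩ := Metric.eventually_nhds_iff_ball.1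
    (hgh.and (Ioo_mem_nhds hlo hhi))
  refine ⟨δ, hδ, fun w hw => ?_⟩
  obtain ⟨hgw, hlo_w, hhi_w⟩ := hball w hw
  rw [← hgw] at hlo_w hhi_w
  rw [Real.dist_eq, abs_lt]
  constructor <;> linarith [hg.lt_iff_lt.1 hlo_w, hg.lt_iff_lt.1 hhi_w]

/-- `v * h v - f (h v)` is the Legendre transform of `f`: `v * γ - f γ` is maximal at `γ = h v`. -/
lemma hasDerivAt_mul_sub_comp_of_eventually_deriv_comp_eq {u : ℝ}
    (hf : ∀ x, HasDerivAt f (g x) x) (hg : StrictMono g) (hgh : ∀ᶠ w in 𝓝 u, g (h w) = w) :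
    HasDerivAt (fun v => v * h v - f (h v)) (h u) u := by
  have hu : g (h u) = u := hgh.self_of_nhds
  have tangent := add_mul_sub_le_of_hasDerivAt_of_monotone hf hg.monotone
  have hsmall : (fun w => (w - u) * (h w - h u)) =o[𝓝 u] fun w => w - u := by
    have hcont := continuousAt_of_strictMono_of_eventually_comp_eq hg hgh
    have : (fun w => h w - h u) =o[𝓝 u] fun _ => (1 : ℝ) :=
      (Asymptotics.isLittleO_one_iff ℝ).2 (by simpa using hcont.sub_const (h u))
    simpa using (Asymptotics.isBigO_refl (fun w => w - u) (𝓝 u)).mul_isLittleO this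
  rw [hasDerivAt_iff_isLittleO]
  refine Asymptotics.IsBigO.trans_isLittleO ?_ hsmall
  -- `0 ≤ G w - G u - (w - u) * h u ≤ (w - u) * (h w - h u)` for `G v = v * h v - f (h v)`
  refine Asymptotics.IsBigO.of_bound 1 (hgh.mono fun w hw => ?_)
  have lower := tangent (h w) (h u)
  have upper := tangent (h u) (h w)
  rw [hw] at lower
  rw [hu] at upper
  rw [one_mul, Real.norm_eq_abs, Real.norm_eq_abs, smul_eq_mul]
  refine abs_le_abs_of_nonneg ?_ ?_ <;> nlinarith

end Legendre

section Moments

variable {pr : Measure ℝ} {d : ℝ}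

noncomputable def tiltMoment (pr : Measure ℝ) (k : ℕ) (γ d : ℝ) : ℝ :=
  ∫ x, x ^ k * exp (γ * x - d / 2 * x ^ 2) ∂pr

lemma abs_pow_mul_exp_le (hd : 0 < d) {γ b : ℝ} (hγ : |γ| ≤ b) (k : ℕ) (x : ℝ) :
    |x| ^ k * exp (γ * x - d / 2 * x ^ 2) ≤ exp ((b + k) ^ 2 / (2 * d)) := by
  have hpow : |x| ^ k ≤ exp (k * |x|) := by
    calc |x| ^ k ≤ exp |x| ^ k :=
          pow_le_pow_left₀ (abs_nonneg x) (by linarith [add_one_le_exp |x|]) k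
      _ = exp (k * |x|) := by rw [← exp_nat_mul]
  have hlin : γ * x ≤ b * |x| :=
    (le_abs_self _).trans (by rw [abs_mul]; gcongr)
  have hquad : (b + k) * |x| - d / 2 * x ^ 2 ≤ (b + k) ^ 2 / (2 * d) := by
    rw [le_div_iff₀ (by positivity), ← sq_abs x]
    nlinarith [sq_nonneg (d * |x| - (b + k))]
  calc |x| ^ k * exp (γ * x - d / 2 * x ^ 2)
      ≤ exp (k * |x|) * exp (γ * x - d / 2 * x ^ 2) := by gcongr
    _ = exp (k * |x| + (γ * x - d / 2 * x ^ 2)) := (exp_add _ _).symm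
    _ ≤ exp ((b + k) ^ 2 / (2 * d)) := exp_le_exp.2 (by linarith)

lemma integrable_pow_mul_exp [IsFiniteMeasure pr] (hd : 0 < d) (γ : ℝ) (k : ℕ) :
    Integrable (fun x => x ^ k * exp (γ * x - d / 2 * x ^ 2)) pr :=
  (integrable_const _).mono' (by fun_prop) (ae_of_all _ fun x => by
    simpa using abs_pow_mul_exp_le hd le_rfl k x)

lemma cgf_eq_log_tiltMoment (γ : ℝ) : cgf pr γ d = log (tiltMoment pr 0 γ d) := by
  simp [_root_.cgf, tiltMoment]

lemma tiltMoment_zero_pos [IsFiniteMeasure pr] [NeZero pr] (hd : 0 < d) (γ : ℝ) :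
    0 < tiltMoment pr 0 γ d := by
  have hint := integrable_pow_mul_exp (pr := pr) hd γ 0
  simp only [pow_zero, one_mul] at hint
  simpa [tiltMoment] using integral_exp_pos hint

lemma hasDerivAt_tiltMoment [IsFiniteMeasure pr] (hd : 0 < d) (k : ℕ) (γ : ℝ) :
    HasDerivAt (tiltMoment pr k · d) (tiltMoment pr (k + 1) γ d) γ := by
  refine (hasDerivAt_integral_of_dominated_loc_of_deriv_le
    (F := fun γ x => x ^ k * exp (γ * x - d / 2 * x ^ 2))
    (F' := fun γ x => x ^ (k + 1) * exp (γ * x - d / 2 * x ^ 2)) (Metric.ball_mem_nhds γ one_pos)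
    (Eventually.of_forall fun γ' => by fun_prop)
    (integrable_pow_mul_exp hd γ k) (by fun_prop)
    (ae_of_all _ fun x γ' hγ' => ?_)
    (integrable_const (exp ((|γ| + 1 + (k + 1 : ℕ)) ^ 2 / (2 * d))))
    (ae_of_all _ fun x γ' _ => ?_)).2
  · have hγ'' : |γ'| ≤ |γ| + 1 := by
      have := abs_sub_abs_le_abs_sub γ' γ
      rw [Metric.mem_ball, Real.dist_eq] at hγ'
      linarith
    simpa using abs_pow_mul_exp_le hd hγ'' (k + 1) x
  · have := (((hasDerivAt_mul_const (x := γ') x).sub_const (d / 2 * x ^ 2)).exp).const_mul (x ^ k)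
    simpa [pow_succ, mul_comm, mul_left_comm, mul_assoc] using this

lemma tiltMean_eq_div_s3 [IsFiniteMeasure pr] [NeZero pr] (hd : 0 < d) (γ : ℝ) :
    tiltMean pr γ d = tiltMoment pr 1 γ d / tiltMoment pr 0 γ d := by
  have hdensity : tiltMean pr γ d
      = ∫ x, (exp (γ * x - d / 2 * x ^ 2 - cgf pr γ d)).toNNReal • x ∂pr :=
    integral_withDensity_eq_integral_smul (by fun_prop) _
  have hpos := tiltMoment_zero_pos (pr := pr) hd γ
  rw [hdensity, eq_div_iff hpos.ne']
  conv_rhs => rw [tiltMoment]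
  rw [← integral_mul_const]
  refine integral_congr_ae (ae_of_all _ fun x => ?_)
  dsimp only
  rw [NNReal.smul_def, smul_eq_mul, Real.coe_toNNReal _ (exp_pos _).le, cgf_eq_log_tiltMoment,
    exp_sub,
    exp_log hpos]
  field_simp

lemma hasDerivAt_cgf [IsFiniteMeasure pr] [NeZero pr] (hd : 0 < d) (γ : ℝ) :
    HasDerivAt (fun γ => cgf pr γ d) (tiltMean pr γ d) γ := by
  simp only [cgf_eq_log_tiltMoment, tiltMean_eq_div_s3 hd]
  exact (hasDerivAt_tiltMoment hd 0 γ).log (tiltMoment_zero_pos hd γ).ne'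

end Moments

section Variance

variable {pr : Measure ℝ} {d : ℝ}

lemma measure_compl_singleton_ne_zero_of_mem_msupp_s3 {x m : ℝ} (hx : x ∈ msupp pr) (hne : x ≠ m) :
    pr {m}ᶜ ≠ 0 :=
  hx _ (isOpen_compl_singleton.mem_nhds hne)

lemma tiltMoment_one_sq_lt [IsFiniteMeasure pr] [NeZero pr] (hd : 0 < d) {x₀ x₁ : ℝ}
    (hx₀ : x₀ ∈ msupp pr) (hx₁ : x₁ ∈ msupp pr) (hne : x₀ ≠ x₁) (γ : ℝ) :
    tiltMoment pr 1 γ d ^ 2 < tiltMoment pr 2 γ d * tiltMoment pr 0 γ d := by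
  set m := tiltMoment pr 1 γ d / tiltMoment pr 0 γ d
  have hP0 := tiltMoment_zero_pos (pr := pr) hd γ
  have hI := fun k => integrable_pow_mul_exp (pr := pr) hd γ k
  set f : ℝ → ℝ := fun x => (x - m) ^ 2 * exp (γ * x - d / 2 * x ^ 2)
  have hf_expand : f = fun x => x ^ 2 * exp (γ * x - d / 2 * x ^ 2)
      - 2 * m * (x ^ 1 * exp (γ * x - d / 2 * x ^ 2))
      + m ^ 2 * (x ^ 0 * exp (γ * x - d / 2 * x ^ 2)) := by
    funext x; ring
  have h21 : Integrable (fun x => x ^ 2 * exp (γ * x - d / 2 * x ^ 2)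
      - 2 * m * (x ^ 1 * exp (γ * x - d / 2 * x ^ 2))) pr := (hI 2).sub ((hI 1).const_mul _)
  have hf_int : ∫ x, f x ∂pr
      = tiltMoment pr 2 γ d - 2 * m * tiltMoment pr 1 γ d + m ^ 2 * tiltMoment pr 0 γ d := by
    rw [hf_expand, integral_add h21 ((hI 0).const_mul _), integral_sub (hI 2) ((hI 1).const_mul _),
      integral_const_mul, integral_const_mul]
    rfl
  have hf_support : Function.support f = {m}ᶜ := by
    ext x
    simp [f, sub_eq_zero, (exp_pos _).ne']
  have hf_pos : 0 < ∫ x, f x ∂pr := by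
    rw [integral_pos_iff_support_of_nonneg (fun x => by positivity)
      (hf_expand ▸ h21.add ((hI 0).const_mul _)), hf_support,
      pos_iff_ne_zero]
    by_cases hm : x₀ = m
    · exact measure_compl_singleton_ne_zero_of_mem_msupp_s3 hx₁ (hm ▸ hne.symm)
    · exact measure_compl_singleton_ne_zero_of_mem_msupp_s3 hx₀ hm
  rw [hf_int] at hf_pos
  have : tiltMoment pr 2 γ d * tiltMoment pr 0 γ d - tiltMoment pr 1 γ d ^ 2
      = (tiltMoment pr 2 γ d - 2 * m * tiltMoment pr 1 γ d + m ^ 2 * tiltMoment pr 0 γ d)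
        * tiltMoment pr 0 γ d := by
    simp only [m]; field_simp; ring
  nlinarith [mul_pos hf_pos hP0]

lemma strictMono_tiltMean [IsFiniteMeasure pr] [NeZero pr] (hd : 0 < d) {x₀ x₁ : ℝ}
    (hx₀ : x₀ ∈ msupp pr) (hx₁ : x₁ ∈ msupp pr) (hne : x₀ ≠ x₁) :
    StrictMono fun γ => tiltMean pr γ d := by
  refine strictMono_of_deriv_pos fun γ => ?_
  have hP0 := tiltMoment_zero_pos (pr := pr) hd γ
  have hderiv : HasDerivAt (fun γ => tiltMean pr γ d)
      ((tiltMoment pr 2 γ d * tiltMoment pr 0 γ d - tiltMoment pr 1 γ d * tiltMoment pr 1 γ d)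
        / tiltMoment pr 0 γ d ^ 2) γ := by
    simp only [tiltMean_eq_div_s3 hd]
    exact (hasDerivAt_tiltMoment hd 1 γ).div (hasDerivAt_tiltMoment hd 0 γ) hP0.ne'
  rw [hderiv.deriv]
  have := tiltMoment_one_sq_lt hd hx₀ hx₁ hne γ
  exact div_pos (by nlinarith) (by positivity)

end Variance

theorem stmt3_general (pr : Measure ℝ) [IsProbabilityMeasure pr]
    (d : ℝ) (hd : 0 < d) (h : ℝ → ℝ)
    (hh : ∀ u : ℝ, (∃ x ∈ msupp pr, x < u) → (∃ x ∈ msupp pr, u < x) →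
      tiltMean pr (h u) d = u)
    (u : ℝ) (hul : ∃ x ∈ msupp pr, x < u) (huu : ∃ x ∈ msupp pr, u < x) :
    HasDerivAt (fun v => v * h v - cgf pr (h v) d + cgf pr 0 d) (h u) u := by
  obtain ⟨x₀, hx₀, hx₀u⟩ := hul
  obtain ⟨x₁, hx₁, hux₁⟩ := huu
  have hmono := strictMono_tiltMean hd hx₀ hx₁ (hx₀u.trans hux₁).ne
  have hinverse : ∀ᶠ w in 𝓝 u, tiltMean pr (h w) d = w :=
    eventually_of_mem (Ioo_mem_nhds hx₀u hux₁) fun w hw => hh w ⟨x₀, hx₀, hw.1⟩ ⟨x₁, hx₁, hw.2⟩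
  exact (hasDerivAt_mul_sub_comp_of_eventually_deriv_comp_eq (hasDerivAt_cgf hd) hmono
    hinverse).add_const _

/-- with `h(·,d)` the (unique) tilt parameter matching a prescribed mean,
the function `u ↦ G(u,d) = u·h(u,d) − c(h(u,d),d) + c(0,d)` is differentiable on
`(m(π), M(π))` with derivative `h(u,d)`. -/
theorem stmt3 (pr : Measure ℝ) [IsProbabilityMeasure pr]
    (hneg : ∃ x ∈ msupp pr, x < 0) (hpos : ∃ x ∈ msupp pr, 0 < x)
    (d : ℝ) (hd : 0 < d) (h : ℝ → ℝ)
    (hh : ∀ u : ℝ, (∃ x ∈ msupp pr, x < u) → (∃ x ∈ msupp pr, u < x) →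
      tiltMean pr (h u) d = u)
    (u : ℝ) (hul : ∃ x ∈ msupp pr, x < u) (huu : ∃ x ∈ msupp pr, u < x) :
    HasDerivAt (fun v => v * h v - cgf pr (h v) d + cgf pr 0 d) (h u) u :=
  stmt3_general pr d hd h hh u hul huu
end

section
/- Let π be a probability measure on ℝ with inf supp(π) < 0 < sup supp(π), and fix u ∈ (m(π), M(π)). Then the function d ↦ G(u,d) is differentiable on (0,∞) and for every d > 0, ∂G/∂d(u,d) = (1/2) ∫ x² dπ^{(h(u,d),d)}(x) − (1/2) ∫ x² dπ^{(0,d)}(x). -/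
open MeasureTheory ProbabilityTheory Filter Set

noncomputable def ee (γ t x : ℝ) : ℝ := Real.exp (γ * x - t / 2 * x ^ 2)

lemma ee_pos (γ t x : ℝ) : 0 < ee γ t x := Real.exp_pos _

lemma expo_le {t : ℝ} (ht : 0 < t) (γ x : ℝ) :
    γ * x - t / 2 * x ^ 2 ≤ γ ^ 2 / t - t / 4 * x ^ 2 := by
  have h : γ ^ 2 / t * t = γ ^ 2 := div_mul_cancel₀ _ ht.ne'
  nlinarith [sq_nonneg (γ - t / 2 * x), sq_nonneg x, mul_pos ht ht]

lemma ee_le {t : ℝ} (ht : 0 < t) (γ x : ℝ) : ee γ t x ≤ Real.exp (γ ^ 2 / t) := by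
  have h := expo_le ht γ x
  have : γ * x - t / 2 * x ^ 2 ≤ γ ^ 2 / t := by nlinarith [sq_nonneg x]
  exact Real.exp_le_exp.2 this

lemma sq_mul_ee_le {t : ℝ} (ht : 0 < t) (γ x : ℝ) :
    x ^ 2 * ee γ t x ≤ Real.exp (γ ^ 2 / t) * (4 / t) := by
  have h1 : x ^ 2 * ee γ t x ≤ x ^ 2 * Real.exp (γ ^ 2 / t - t / 4 * x ^ 2) :=
    mul_le_mul_of_nonneg_left (Real.exp_le_exp.2 (expo_le ht γ x)) (sq_nonneg x)
  have h2 : x ^ 2 * Real.exp (γ ^ 2 / t - t / 4 * x ^ 2)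
      = Real.exp (γ ^ 2 / t) * (x ^ 2 * Real.exp (-(t / 4 * x ^ 2))) := by
    rw [Real.exp_sub, Real.exp_neg]; ring_nf
  have h3 : x ^ 2 * Real.exp (-(t / 4 * x ^ 2)) ≤ 4 / t := by
    set y := t / 4 * x ^ 2 with hy
    have hy0 : 0 ≤ y := by positivity
    have hyle : y ≤ Real.exp y := (Real.add_one_le_exp y).trans' (by linarith)
    have hpos : 0 < Real.exp y := Real.exp_pos _
    have : y * Real.exp (-y) ≤ 1 := by
      rw [Real.exp_neg]
      rw [mul_inv_le_iff₀ hpos]; simpa using hyle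
    have hx2 : x ^ 2 = (4 / t) * y := by field_simp [hy]; ring
    calc x ^ 2 * Real.exp (-y) = (4 / t) * (y * Real.exp (-y)) := by rw [hx2]; ring
      _ ≤ (4 / t) * 1 := by
          apply mul_le_mul_of_nonneg_left this (by positivity)
      _ = 4 / t := mul_one _
  calc x ^ 2 * ee γ t x ≤ Real.exp (γ ^ 2 / t) * (x ^ 2 * Real.exp (-(t / 4 * x ^ 2))) := by
        rw [← h2]; exact h1
    _ ≤ Real.exp (γ ^ 2 / t) * (4 / t) :=
        mul_le_mul_of_nonneg_left h3 (Real.exp_pos _).le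

lemma continuous_ee (γ t : ℝ) : Continuous (fun x => ee γ t x) := by
  unfold ee; fun_prop

section prob
variable {pr : Measure ℝ} [IsProbabilityMeasure pr]

lemma integrable_of_bdd {f : ℝ → ℝ} (hf : Continuous f) {C : ℝ} (hb : ∀ x, ‖f x‖ ≤ C) :
    Integrable f pr :=
  (integrable_const C).mono' hf.aestronglyMeasurable (Eventually.of_forall hb)

lemma integrable_ee {t : ℝ} (ht : 0 < t) (γ : ℝ) : Integrable (fun x => ee γ t x) pr :=
  integrable_of_bdd (continuous_ee γ t)
    (fun x => by rw [Real.norm_of_nonneg (ee_pos γ t x).le]; exact ee_le ht γ x)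

lemma integrable_sq_ee {t : ℝ} (ht : 0 < t) (γ : ℝ) :
    Integrable (fun x => x ^ 2 * ee γ t x) pr :=
  integrable_of_bdd (by have := continuous_ee γ t; fun_prop)
    (fun x => by
      rw [Real.norm_of_nonneg (mul_nonneg (sq_nonneg x) (ee_pos γ t x).le)]
      exact sq_mul_ee_le ht γ x)

lemma integrable_id_ee {t : ℝ} (ht : 0 < t) (γ : ℝ) :
    Integrable (fun x => x * ee γ t x) pr := by
  apply integrable_of_bdd (f := fun x => x * ee γ t x)
    (by have := continuous_ee γ t; fun_prop)
    (C := Real.exp (γ ^ 2 / t) + Real.exp (γ ^ 2 / t) * (4 / t))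
  intro x
  have h1 : ‖x * ee γ t x‖ = |x| * ee γ t x := by
    rw [norm_mul, Real.norm_of_nonneg (ee_pos γ t x).le, Real.norm_eq_abs]
  have h2 : |x| * ee γ t x ≤ (1 + x ^ 2) * ee γ t x := by
    apply mul_le_mul_of_nonneg_right _ (ee_pos γ t x).le
    nlinarith [abs_nonneg x, sq_abs x, sq_nonneg (|x| - 1)]
  rw [h1]
  calc |x| * ee γ t x ≤ (1 + x ^ 2) * ee γ t x := h2
    _ = ee γ t x + x ^ 2 * ee γ t x := by ring
    _ ≤ Real.exp (γ ^ 2 / t) + Real.exp (γ ^ 2 / t) * (4 / t) :=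
        add_le_add (ee_le ht γ x) (sq_mul_ee_le ht γ x)

lemma integral_ee_pos {t : ℝ} (ht : 0 < t) (γ : ℝ) : 0 < ∫ x, ee γ t x ∂pr := by
  rw [integral_pos_iff_support_of_nonneg (fun x => (ee_pos γ t x).le) (integrable_ee ht γ)]
  have : Function.support (fun x => ee γ t x) = Set.univ :=
    Set.eq_univ_of_forall fun x => (ee_pos γ t x).ne'
  simp [this]

lemma exp_cgf {t : ℝ} (ht : 0 < t) (γ : ℝ) :
    Real.exp (cgf pr γ t) = ∫ x, ee γ t x ∂pr := by
  simp only [_root_.cgf]; exact Real.exp_log (integral_ee_pos ht γ)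

lemma integral_tilt {t : ℝ} (ht : 0 < t) (γ : ℝ) (g : ℝ → ℝ) :
    ∫ x, g x ∂(tilt pr γ t) = (∫ x, g x * ee γ t x ∂pr) / (∫ x, ee γ t x ∂pr) := by
  have meas : Measurable fun x =>
      Real.toNNReal (Real.exp (γ * x - t / 2 * x ^ 2 - cgf pr γ t)) := by
    apply Measurable.real_toNNReal; fun_prop
  have : tilt pr γ t = pr.withDensity fun x =>
      ((Real.toNNReal (Real.exp (γ * x - t / 2 * x ^ 2 - cgf pr γ t)) : NNReal) : ENNReal) := rfl
  rw [this, integral_withDensity_eq_integral_smul meas g]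
  have heq : ∀ x, (Real.toNNReal (Real.exp (γ * x - t / 2 * x ^ 2 - cgf pr γ t))) • g x
      = Real.exp (-(cgf pr γ t)) * (g x * ee γ t x) := by
    intro x
    rw [NNReal.smul_def, Real.coe_toNNReal _ (Real.exp_pos _).le]
    rw [show γ * x - t / 2 * x ^ 2 - cgf pr γ t = -(cgf pr γ t) + (γ * x - t / 2 * x ^ 2) by ring,
      Real.exp_add, smul_eq_mul, ee]
    ring
  simp_rw [heq]
  rw [integral_const_mul, Real.exp_neg, exp_cgf ht γ]
  rw [inv_mul_eq_div]

section chunk2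
open MeasureTheory Filter Set Metric

lemma cgf_eq (pr : MeasureTheory.Measure ℝ) (γ t : ℝ) :
    _root_.cgf pr γ t = Real.log (∫ x, ee γ t x ∂pr) := rfl

variable {pr : MeasureTheory.Measure ℝ} [IsProbabilityMeasure pr]

lemma hasDerivAt_integral_ee {d : ℝ} (hd : 0 < d) (γ : ℝ) :
    HasDerivAt (fun t => ∫ x, ee γ t x ∂pr) (∫ x, -(x ^ 2 / 2) * ee γ d x ∂pr) d := by
  have key := hasDerivAt_integral_of_dominated_loc_of_deriv_le (μ := pr) (𝕜 := ℝ)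
    (F := fun t x => ee γ t x) (F' := fun t x => -(x ^ 2 / 2) * ee γ t x)
    (x₀ := d) (s := Metric.ball d (d / 2)) (bound := fun x => Real.exp (2 * γ ^ 2 / d) * (8 / d))
    (Metric.ball_mem_nhds d (by linarith))
    (Eventually.of_forall fun t => (continuous_ee γ t).aestronglyMeasurable)
    (integrable_ee hd γ)
    (by have := continuous_ee γ d
        exact Continuous.aestronglyMeasurable (by fun_prop))
    ?_ ?_ ?_
  · exact key.2
  · refine ae_of_all _ fun x t ht => ?_
    have htlb : d / 2 ≤ t := by
      have := abs_lt.1 (mem_ball_iff_norm.1 ht); linarith [this.1]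
    have htpos : 0 < t := by linarith
    have h1 : ‖-(x ^ 2 / 2) * ee γ t x‖ ≤ x ^ 2 * ee γ t x := by
      rw [norm_mul, Real.norm_of_nonneg (ee_pos γ t x).le, norm_neg,
        Real.norm_of_nonneg (by positivity)]
      have := (ee_pos γ t x).le
      nlinarith [sq_nonneg x]
    refine h1.trans ((sq_mul_ee_le htpos γ x).trans ?_)
    have e1 : γ ^ 2 / t ≤ 2 * γ ^ 2 / d := by
      rw [show 2 * γ ^ 2 / d = γ ^ 2 / (d / 2) by ring]
      exact div_le_div_of_nonneg_left (sq_nonneg γ) (by linarith) htlb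
    have e2 : 4 / t ≤ 8 / d := by
      rw [show (8:ℝ) / d = 4 / (d / 2) by ring]
      exact div_le_div_of_nonneg_left (by norm_num) (by linarith) htlb
    exact mul_le_mul (Real.exp_le_exp.2 e1) e2 (by positivity) (Real.exp_pos _).le
  · exact integrable_of_bdd (by fun_prop) (C := Real.exp (2 * γ ^ 2 / d) * (8 / d))
      (fun x => by rw [Real.norm_of_nonneg (by positivity)])
  · refine ae_of_all _ fun x t _ => ?_
    have h1 : HasDerivAt (fun s : ℝ => γ * x - s / 2 * x ^ 2) (-(x ^ 2 / 2)) t := by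
      have := (((hasDerivAt_id t).div_const 2).mul_const (x ^ 2)).const_sub (γ * x)
      exact this.congr_deriv (by ring)
    have := h1.exp
    simpa [ee, mul_comm] using this

lemma hasDerivAt_cgf_s5 {d : ℝ} (hd : 0 < d) (γ : ℝ) :
    HasDerivAt (fun t => _root_.cgf pr γ t)
      (-(1 / 2 * ((∫ x, x ^ 2 * ee γ d x ∂pr) / ∫ x, ee γ d x ∂pr))) d := by
  have h := (hasDerivAt_integral_ee (pr := pr) hd γ).log (integral_ee_pos hd γ).ne'
  have hval : ∫ x, -(x ^ 2 / 2) * ee γ d x ∂pr = -(1 / 2) * ∫ x, x ^ 2 * ee γ d x ∂pr := by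
    rw [← integral_const_mul]
    congr 1; funext x; ring
  simp only [cgf_eq]
  convert h using 1
  rw [hval]; ring

lemma key_max {t γ₀ u : ℝ} (ht : 0 < t) (hmean : tiltMean pr γ₀ t = u) (γ : ℝ) :
    u * γ - _root_.cgf pr γ t ≤ u * γ₀ - _root_.cgf pr γ₀ t := by
  set δ := γ - γ₀ with hδ
  set I₀ := ∫ x, ee γ₀ t x ∂pr with hI₀
  have hI₀pos : 0 < I₀ := integral_ee_pos ht γ₀
  have hA : ∫ x, x * ee γ₀ t x ∂pr = u * I₀ := by
    have h1 := integral_tilt (pr := pr) ht γ₀ (fun x => x)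
    rw [tiltMean] at hmean
    rw [h1, div_eq_iff hI₀pos.ne'] at hmean
    exact hmean
  have pt : ∀ x, Real.exp (u * δ) * ((1 - δ * u) * ee γ₀ t x + δ * (x * ee γ₀ t x))
      ≤ ee γ t x := by
    intro x
    have hee : ee γ t x = Real.exp (u * δ) * (Real.exp (δ * (x - u)) * ee γ₀ t x) := by
      rw [ee, ee, ← Real.exp_add, ← Real.exp_add, Real.exp_eq_exp]
      simp only [hδ]; ring
    rw [hee]
    have h2 : 1 + δ * (x - u) ≤ Real.exp (δ * (x - u)) := by
      have := Real.add_one_le_exp (δ * (x - u)); linarith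
    have h3 : (1 - δ * u) * ee γ₀ t x + δ * (x * ee γ₀ t x)
        = (1 + δ * (x - u)) * ee γ₀ t x := by ring
    rw [h3]
    have := mul_le_mul_of_nonneg_right h2 (ee_pos γ₀ t x).le
    exact mul_le_mul_of_nonneg_left this (Real.exp_pos _).le
  have hintL : Integrable (fun x => Real.exp (u * δ) *
      ((1 - δ * u) * ee γ₀ t x + δ * (x * ee γ₀ t x))) pr :=
    (((integrable_ee ht γ₀).const_mul _).add ((integrable_id_ee ht γ₀).const_mul _)).const_mul _
  have hmono := integral_mono hintL (integrable_ee ht γ) pt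
  have hLHS : ∫ x, Real.exp (u * δ) *
      ((1 - δ * u) * ee γ₀ t x + δ * (x * ee γ₀ t x)) ∂pr = Real.exp (u * δ) * I₀ := by
    rw [integral_const_mul, integral_add ((integrable_ee ht γ₀).const_mul _)
      ((integrable_id_ee ht γ₀).const_mul _), integral_const_mul, integral_const_mul, hA, ← hI₀]
    ring
  rw [hLHS] at hmono
  have hlog : u * δ + _root_.cgf pr γ₀ t ≤ _root_.cgf pr γ t := by
    rw [cgf_eq, cgf_eq, ← hI₀]
    calc u * δ + Real.log I₀ = Real.log (Real.exp (u * δ) * I₀) := by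
          rw [Real.log_mul (Real.exp_pos _).ne' hI₀pos.ne', Real.log_exp]
      _ ≤ Real.log (∫ x, ee γ t x ∂pr) :=
          Real.log_le_log (by positivity) hmono
  rw [hδ] at hlog
  nlinarith [hlog]

lemma cgf_midpoint {t₁ t₂ : ℝ} (h1 : 0 < t₁) (h2 : 0 < t₂) (γ₁ γ₂ : ℝ) :
    _root_.cgf pr ((γ₁ + γ₂) / 2) ((t₁ + t₂) / 2)
      ≤ (_root_.cgf pr γ₁ t₁ + _root_.cgf pr γ₂ t₂) / 2 := by
  set f := fun x => ee (γ₁ / 2) (t₁ / 2) x with hf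
  set g := fun x => ee (γ₂ / 2) (t₂ / 2) x with hg
  have hfg : ∀ x, f x * g x = ee ((γ₁ + γ₂) / 2) ((t₁ + t₂) / 2) x := by
    intro x; rw [hf, hg]; simp only [ee, ← Real.exp_add]; congr 1; ring
  have hf2 : ∀ x, f x ^ (2:ℝ) = ee γ₁ t₁ x := by
    intro x; rw [hf]; simp only [ee, ← Real.exp_mul]; congr 1; ring
  have hg2 : ∀ x, g x ^ (2:ℝ) = ee γ₂ t₂ x := by
    intro x; rw [hg]; simp only [ee, ← Real.exp_mul]; congr 1; ring
  have hpq : Real.HolderConjugate 2 2 := Real.holderConjugate_iff.mpr ⟨one_lt_two, by norm_num⟩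
  have hmemf : MemLp f (ENNReal.ofReal 2) pr :=
    MemLp.of_bound (continuous_ee _ _).aestronglyMeasurable _
      (ae_of_all _ fun x => by
        rw [Real.norm_of_nonneg (ee_pos _ _ x).le]; exact ee_le (by linarith) _ x)
  have hmemg : MemLp g (ENNReal.ofReal 2) pr :=
    MemLp.of_bound (continuous_ee _ _).aestronglyMeasurable _
      (ae_of_all _ fun x => by
        rw [Real.norm_of_nonneg (ee_pos _ _ x).le]; exact ee_le (by linarith) _ x)
  have hH : ∫ a, f a * g a ∂pr ≤ (∫ a, f a ^ (2:ℝ) ∂pr) ^ (1 / (2:ℝ)) *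
      (∫ a, g a ^ (2:ℝ) ∂pr) ^ (1 / (2:ℝ)) := integral_mul_le_Lp_mul_Lq_of_nonneg hpq
    (ae_of_all _ fun x => (ee_pos _ _ x).le) (ae_of_all _ fun x => (ee_pos _ _ x).le)
    hmemf hmemg
  simp_rw [hfg, hf2, hg2] at hH
  have hmidpos : 0 < ∫ x, ee ((γ₁ + γ₂) / 2) ((t₁ + t₂) / 2) x ∂pr :=
    integral_ee_pos (by linarith) _
  have hI1 := integral_ee_pos (pr := pr) h1 γ₁
  have hI2 := integral_ee_pos (pr := pr) h2 γ₂
  have hlog := Real.log_le_log hmidpos hH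
  rw [Real.log_mul (by positivity) (by positivity), Real.log_rpow hI1, Real.log_rpow hI2] at hlog
  rw [cgf_eq, cgf_eq, cgf_eq]
  linarith

end chunk2

section chunk3
open Filter Set

lemma touch_deriv {f g : ℝ → ℝ} {d g' : ℝ} (hg : HasDerivAt g g' d)
    (hle : ∀ᶠ t in nhds d, g t ≤ f t) (heq : f d = g d)
    (hmid : ∀ᶠ t in nhds d, f t + f (2 * d - t) ≤ 2 * f d) :
    HasDerivAt f g' d := by
  have hrefl : Tendsto (fun t : ℝ => 2 * d - t) (nhds d) (nhds d) := by
    have h := (tendsto_const_nhds (x := 2 * d) (f := nhds d)).sub tendsto_id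
    have : 2 * d - d = d := by ring
    rwa [this] at h
  have hrefl' : Tendsto (fun t : ℝ => 2 * d - t) (nhdsWithin d {d}ᶜ) (nhdsWithin d {d}ᶜ) := by
    rw [tendsto_nhdsWithin_iff]
    refine ⟨hrefl.mono_left nhdsWithin_le_nhds, ?_⟩
    filter_upwards [self_mem_nhdsWithin] with t ht
    simp only [Set.mem_compl_iff, Set.mem_singleton_iff] at *
    intro hc; apply ht; linarith
  have hslope := hasDerivAt_iff_tendsto_slope.1 hg
  have hslope2 : Tendsto (fun t => slope g d (2 * d - t)) (nhdsWithin d {d}ᶜ) (nhds g') :=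
    hslope.comp hrefl'
  have hdiff : Tendsto (fun t => |slope g d (2 * d - t) - slope g d t|)
      (nhdsWithin d {d}ᶜ) (nhds 0) := by
    have h := (hslope2.sub hslope).abs
    simpa using h
  have hψ : HasDerivAt (fun t => f t - g t) 0 d := by
    rw [hasDerivAt_iff_tendsto_slope]
    apply squeeze_zero_norm' _ hdiff
    have hle2 : ∀ᶠ t in nhdsWithin d {d}ᶜ, g (2 * d - t) ≤ f (2 * d - t) :=
      (hrefl.mono_left nhdsWithin_le_nhds).eventually hle
    filter_upwards [hle.filter_mono nhdsWithin_le_nhds, hle2,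
      hmid.filter_mono nhdsWithin_le_nhds, self_mem_nhdsWithin] with t h1 h2 h3 ht
    have htd : t ≠ d := ht
    have htd0 : t - d ≠ 0 := sub_ne_zero.2 htd
    have hψt : 0 ≤ f t - g t := by linarith
    have hψt' : 0 ≤ f (2 * d - t) - g (2 * d - t) := by linarith
    have hnum : f t - g t ≤ 2 * g d - g t - g (2 * d - t) := by linarith
    have hs1 : slope (fun t => f t - g t) d t = (f t - g t) / (t - d) := by
      rw [slope_def_field, heq]; ring_nf
    have hs2 : slope g d (2 * d - t) - slope g d t
        = (2 * g d - g t - g (2 * d - t)) / (t - d) := by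
      rw [slope_def_field, slope_def_field]
      have h2d : 2 * d - t - d ≠ 0 := by intro hc; apply htd0; linarith
      field_simp
      ring
    rw [hs1, hs2, Real.norm_eq_abs, abs_div, abs_div,
      abs_of_nonneg hψt, abs_of_nonneg (le_trans hψt hnum)]
    gcongr
  have hfe : f = fun t => g t + (f t - g t) := by funext t; ring
  have h := hg.add hψ
  rw [add_zero] at h
  rw [hfe]
  exact h

end chunk3

/-- for fixed `u ∈ (m(π), M(π))`, with `h(u,·)` the (unique) tilt parameter
matching the mean `u`, the function `d ↦ G(u,d) = u·h(u,d) − c(h(u,d),d) + c(0,d)` is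
differentiable on `(0,∞)` with derivative
`(1/2)∫x² dπ^{(h(u,d),d)} − (1/2)∫x² dπ^{(0,d)}`. -/
theorem stmt5 (pr : Measure ℝ) [IsProbabilityMeasure pr]
    (hneg : ∃ x ∈ msupp pr, x < 0) (hpos : ∃ x ∈ msupp pr, 0 < x)
    (u : ℝ) (hul : ∃ x ∈ msupp pr, x < u) (huu : ∃ x ∈ msupp pr, u < x)
    (h : ℝ → ℝ) (hh : ∀ d : ℝ, 0 < d → tiltMean pr (h d) d = u)
    (d : ℝ) (hd : 0 < d) :
    HasDerivAt (fun t => u * h t - cgf pr (h t) t + cgf pr 0 t)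
      ((1 / 2) * ∫ x, x ^ 2 ∂(tilt pr (h d) d) - (1 / 2) * ∫ x, x ^ 2 ∂(tilt pr 0 d)) d := by

  have hg1 : HasDerivAt (fun t => u * h d - _root_.cgf pr (h d) t)
      (1 / 2 * ((∫ x, x ^ 2 * ee (h d) d x ∂pr) / ∫ x, ee (h d) d x ∂pr)) d := by
    have h1 := (hasDerivAt_cgf_s5 (pr := pr) hd (h d)).const_sub (u * h d)
    exact h1.congr_deriv (by ring)
  have hle : ∀ᶠ t in nhds d, u * h d - _root_.cgf pr (h d) t
      ≤ u * h t - _root_.cgf pr (h t) t := by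
    filter_upwards [eventually_gt_nhds hd] with t ht
    exact key_max (pr := pr) ht (hh t ht) (h d)
  have hmid : ∀ᶠ t in nhds d, (u * h t - _root_.cgf pr (h t) t)
      + (u * h (2 * d - t) - _root_.cgf pr (h (2 * d - t)) (2 * d - t))
      ≤ 2 * (u * h d - _root_.cgf pr (h d) d) := by
    filter_upwards [Ioo_mem_nhds hd (by linarith : d < 2 * d)] with t ht
    have ht1 : 0 < t := ht.1
    have ht2 : 0 < 2 * d - t := by linarith [ht.2]
    have hmax := key_max (pr := pr) hd (hh d hd) ((h t + h (2 * d - t)) / 2)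
    have hconv := cgf_midpoint (pr := pr) ht1 ht2 (h t) (h (2 * d - t))
    have he : (t + (2 * d - t)) / 2 = d := by ring
    rw [he] at hconv
    linarith
  have hf1 : HasDerivAt (fun t => u * h t - _root_.cgf pr (h t) t)
      (1 / 2 * ((∫ x, x ^ 2 * ee (h d) d x ∂pr) / ∫ x, ee (h d) d x ∂pr)) d :=
    touch_deriv hg1 hle rfl hmid
  have hc0 := hasDerivAt_cgf_s5 (pr := pr) hd 0
  have hsum := hf1.add hc0
  refine hsum.congr_deriv ?_
  rw [integral_tilt (pr := pr) hd (h d) (fun x => x ^ 2),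
    integral_tilt (pr := pr) hd 0 (fun x => x ^ 2)]
  ring
end prob
end

section
/- Let V : ℝ → ℝ be even, nondecreasing on [0,∞), differentiable with V′ convex on [0,∞), and such that e^{−V} is Lebesgue-integrable, and let π be the probability measure on ℝ whose density with respect to Lebesgue measure is proportional to e^{−V(x)}. Then for every h ∈ ℝ and every d > 0, the variance of the tilted measure satisfies Var_{X ∼ π^{(h,d)}}(X) ≤ Var_{X ∼ π^{(0,d)}}(X). -/
open MeasureTheory ProbabilityTheory Filter Set

open scoped NNReal ENNReal

lemma aux_exp_arg_bound {d : ℝ} (hd : 0 < d) (c x : ℝ) :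
    c * |x| - d / 2 * x ^ 2 ≤ c ^ 2 / d - d / 4 * x ^ 2 := by
  have h1 : 0 ≤ (2 * c - d * |x|) ^ 2 := sq_nonneg _
  have h2 : |x| ^ 2 = x ^ 2 := sq_abs x
  rw [div_sub' hd.ne', le_div_iff₀ hd]
  have h3 : d ^ 2 * |x| ^ 2 = d ^ 2 * x ^ 2 := by rw [h2]
  nlinarith [h1, h3]

lemma aux_pow_exp_bound {a : ℝ} (ha : 0 < a) (k : ℕ) (x : ℝ) :
    |x| ^ k * Real.exp (-(a * x ^ 2)) ≤ 1 + k.factorial / a ^ k := by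
  have hfac : (0:ℝ) < k.factorial := by exact_mod_cast k.factorial_pos
  have hak : (0:ℝ) < a ^ k := by positivity
  have hkey : (a * x ^ 2) ^ k / k.factorial ≤ Real.exp (a * x ^ 2) := by
    have h0 : 0 ≤ a * x ^ 2 := by positivity
    calc (a * x ^ 2) ^ k / k.factorial
        ≤ ∑ i ∈ Finset.range (k + 1), (a * x ^ 2) ^ i / i.factorial := by
          refine Finset.single_le_sum (f := fun i => (a * x ^ 2) ^ i / (i.factorial : ℝ)) ?_ ?_
          · intro i _; positivity
          · simp
      _ ≤ Real.exp (a * x ^ 2) := Real.sum_le_exp_of_nonneg h0 (k + 1)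
  have hdiv : 0 ≤ (k.factorial : ℝ) / a ^ k := by positivity
  rcases le_or_gt (|x|) 1 with hx | hx
  · have h1 : |x| ^ k ≤ 1 := pow_le_one₀ (abs_nonneg x) hx
    have h2 : Real.exp (-(a * x ^ 2)) ≤ 1 := by
      rw [Real.exp_le_one_iff]
      have : 0 ≤ a * x ^ 2 := by positivity
      linarith
    nlinarith [Real.exp_pos (-(a * x ^ 2)), pow_nonneg (abs_nonneg x) k]
  · have h1 : |x| ^ k ≤ x ^ (2 * k) := by
      calc |x| ^ k ≤ (|x| ^ k) ^ 2 := by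
            nlinarith [one_le_pow₀ hx.le (n := k), pow_nonneg (abs_nonneg x) k]
        _ = x ^ (2 * k) := by
            rw [← pow_mul, mul_comm k 2, pow_mul, sq_abs, ← pow_mul]
    have h2 : x ^ (2 * k) ≤ (k.factorial / a ^ k) * Real.exp (a * x ^ 2) := by
      have hx2 : x ^ (2 * k) = (a * x ^ 2) ^ k / a ^ k := by
        rw [eq_div_iff hak.ne', mul_pow, pow_mul]
        ring
      rw [hx2, div_le_iff₀ hak] at *
      rw [div_le_iff₀ hfac] at hkey
      calc (a * x ^ 2) ^ k ≤ Real.exp (a * x ^ 2) * k.factorial := hkey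
        _ = k.factorial / a ^ k * Real.exp (a * x ^ 2) * a ^ k := by field_simp
    have hepos := Real.exp_pos (-(a * x ^ 2))
    calc |x| ^ k * Real.exp (-(a * x ^ 2)) ≤ x ^ (2 * k) * Real.exp (-(a * x ^ 2)) :=
          mul_le_mul_of_nonneg_right h1 hepos.le
      _ ≤ (k.factorial / a ^ k * Real.exp (a * x ^ 2)) * Real.exp (-(a * x ^ 2)) :=
          mul_le_mul_of_nonneg_right h2 hepos.le
      _ = k.factorial / a ^ k := by
          rw [mul_assoc, ← Real.exp_add]; simp
      _ ≤ 1 + k.factorial / a ^ k := by linarith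

lemma aux_integrable_abs {V : ℝ → ℝ} {d : ℝ} (hd : 0 < d) (hVcont : Continuous V)
    (hVint : Integrable (fun x => Real.exp (-V x))) (k : ℕ) (c : ℝ) :
    Integrable (fun x => |x| ^ k * Real.exp (c * |x| - d / 2 * x ^ 2 - V x)) := by
  have hmeas : AEStronglyMeasurable
      (fun x => |x| ^ k * Real.exp (c * |x| - d / 2 * x ^ 2 - V x)) volume := by
    apply Continuous.aestronglyMeasurable
    exact (continuous_abs.pow k).mul (Real.continuous_exp.comp (by fun_prop))
  set C : ℝ := Real.exp (c ^ 2 / d) * (1 + k.factorial / (d / 4) ^ k) with hC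
  refine (hVint.const_mul C).mono' hmeas (Eventually.of_forall fun x => ?_)
  have hnn : 0 ≤ |x| ^ k * Real.exp (c * |x| - d / 2 * x ^ 2 - V x) := by positivity
  rw [Real.norm_of_nonneg hnn]
  have hsplit : Real.exp (c * |x| - d / 2 * x ^ 2 - V x)
      = Real.exp (c * |x| - d / 2 * x ^ 2) * Real.exp (-V x) := by
    rw [← Real.exp_add]; ring_nf
  have h1 : Real.exp (c * |x| - d / 2 * x ^ 2) ≤
      Real.exp (c ^ 2 / d) * Real.exp (-(d / 4 * x ^ 2)) := by
    rw [← Real.exp_add]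
    exact Real.exp_le_exp.2 (by linarith [aux_exp_arg_bound hd c x])
  have h2 : |x| ^ k * Real.exp (-(d / 4 * x ^ 2)) ≤ 1 + k.factorial / (d / 4) ^ k :=
    aux_pow_exp_bound (by linarith) k x
  have hek : (0:ℝ) ≤ |x| ^ k := by positivity
  have heV : (0:ℝ) < Real.exp (-V x) := Real.exp_pos _
  calc |x| ^ k * Real.exp (c * |x| - d / 2 * x ^ 2 - V x)
      = (|x| ^ k * Real.exp (c * |x| - d / 2 * x ^ 2)) * Real.exp (-V x) := by
        rw [hsplit]; ring
    _ ≤ (Real.exp (c ^ 2 / d) * (|x| ^ k * Real.exp (-(d / 4 * x ^ 2)))) * Real.exp (-V x) := by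
        apply mul_le_mul_of_nonneg_right _ heV.le
        calc |x| ^ k * Real.exp (c * |x| - d / 2 * x ^ 2)
            ≤ |x| ^ k * (Real.exp (c ^ 2 / d) * Real.exp (-(d / 4 * x ^ 2))) :=
              mul_le_mul_of_nonneg_left h1 hek
          _ = Real.exp (c ^ 2 / d) * (|x| ^ k * Real.exp (-(d / 4 * x ^ 2))) := by ring
    _ ≤ (Real.exp (c ^ 2 / d) * (1 + k.factorial / (d / 4) ^ k)) * Real.exp (-V x) := by
        apply mul_le_mul_of_nonneg_right _ heV.le
        exact mul_le_mul_of_nonneg_left h2 (Real.exp_pos _).le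
    _ = C * Real.exp (-V x) := by rw [hC]

lemma aux_integrable_pow {V : ℝ → ℝ} {d : ℝ} (hd : 0 < d) (hVcont : Continuous V)
    (hVint : Integrable (fun x => Real.exp (-V x))) (k : ℕ) (h : ℝ) :
    Integrable (fun x => x ^ k * Real.exp (h * x - d / 2 * x ^ 2 - V x)) := by
  have hmeas : AEStronglyMeasurable
      (fun x => x ^ k * Real.exp (h * x - d / 2 * x ^ 2 - V x)) volume := by
    apply Continuous.aestronglyMeasurable
    exact (continuous_pow k).mul (Real.continuous_exp.comp (by fun_prop))
  refine (aux_integrable_abs hd hVcont hVint k |h|).mono' hmeas (Eventually.of_forall fun x => ?_)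
  rw [Real.norm_eq_abs, abs_mul, abs_pow, Real.abs_exp]
  have : h * x - d / 2 * x ^ 2 - V x ≤ |h| * |x| - d / 2 * x ^ 2 - V x := by
    have : h * x ≤ |h| * |x| := le_trans (le_abs_self _) (by rw [abs_mul])
    linarith
  exact mul_le_mul_of_nonneg_left (Real.exp_le_exp.2 this) (by positivity)

noncomputable def auxM (V : ℝ → ℝ) (d : ℝ) (k : ℕ) (h : ℝ) : ℝ :=
  ∫ x, x ^ k * Real.exp (h * x - d / 2 * x ^ 2 - V x)

lemma aux_hasDerivAt_M {V : ℝ → ℝ} {d : ℝ} (hd : 0 < d) (hVcont : Continuous V)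
    (hVint : Integrable (fun x => Real.exp (-V x))) (k : ℕ) (h₀ : ℝ) :
    HasDerivAt (auxM V d k) (auxM V d (k + 1) h₀) h₀ := by
  have hcont : ∀ h : ℝ, AEStronglyMeasurable
      (fun x => x ^ k * Real.exp (h * x - d / 2 * x ^ 2 - V x)) volume := fun h =>
    Continuous.aestronglyMeasurable
      ((continuous_pow k).mul (Real.continuous_exp.comp (by fun_prop)))
  have hcont' : AEStronglyMeasurable
      (fun x => x ^ (k + 1) * Real.exp (h₀ * x - d / 2 * x ^ 2 - V x)) volume :=
    Continuous.aestronglyMeasurable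
      ((continuous_pow (k + 1)).mul (Real.continuous_exp.comp (by fun_prop)))
  have key := hasDerivAt_integral_of_dominated_loc_of_deriv_le (μ := volume)
    (F := fun h x => x ^ k * Real.exp (h * x - d / 2 * x ^ 2 - V x))
    (F' := fun h x => x ^ (k + 1) * Real.exp (h * x - d / 2 * x ^ 2 - V x))
    (x₀ := h₀)
    (bound := fun x => |x| ^ (k + 1) * Real.exp ((|h₀| + 1) * |x| - d / 2 * x ^ 2 - V x))
    (Metric.ball_mem_nhds h₀ one_pos) (Eventually.of_forall fun h => hcont h)
    (aux_integrable_pow hd hVcont hVint k h₀) hcont'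
    (Eventually.of_forall fun x => ?_)
    (aux_integrable_abs hd hVcont hVint (k + 1) (|h₀| + 1))
    (Eventually.of_forall fun x => ?_)
  · exact key.2
  · -- bound
    intro h hball
    have hh : |h| ≤ |h₀| + 1 := by
      have := mem_ball_iff_norm.1 hball
      rw [Real.norm_eq_abs] at this
      calc |h| = |h₀ + (h - h₀)| := by ring_nf
        _ ≤ |h₀| + |h - h₀| := abs_add_le _ _
        _ ≤ |h₀| + 1 := by linarith
    rw [Real.norm_eq_abs, abs_mul, abs_pow, Real.abs_exp]
    have harg : h * x - d / 2 * x ^ 2 - V x ≤ (|h₀| + 1) * |x| - d / 2 * x ^ 2 - V x := by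
      have h1 : h * x ≤ |h| * |x| := le_trans (le_abs_self _) (by rw [abs_mul])
      have h2 : |h| * |x| ≤ (|h₀| + 1) * |x| := mul_le_mul_of_nonneg_right hh (abs_nonneg x)
      linarith
    exact mul_le_mul_of_nonneg_left (Real.exp_le_exp.2 harg) (by positivity)
  · -- differentiability
    intro h _
    have h1 : HasDerivAt (fun h : ℝ => h * x - d / 2 * x ^ 2 - V x) x h :=
      ((hasDerivAt_mul_const x).sub_const _).sub_const _
    have h2 := (h1.exp).const_mul (x ^ k)
    refine h2.congr_deriv ?_
    rw [pow_succ]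
    ring

lemma aux_convex_increment {f : ℝ → ℝ} (hf : ConvexOn ℝ (Ici 0) f) {a b L : ℝ}
    (ha : 0 ≤ a) (hab : a ≤ b) (hL : 0 ≤ L) : f (a + L) + f b ≤ f a + f (b + L) := by
  rcases eq_or_lt_of_le hL with rfl | hL'
  · simp
  have hT : 0 < b + L - a := by linarith
  set lam : ℝ := (b - a) / (b + L - a) with hlam
  set mu : ℝ := L / (b + L - a) with hmu
  have hlam0 : 0 ≤ lam := div_nonneg (by linarith) hT.le
  have hmu0 : 0 ≤ mu := div_nonneg hL hT.le
  have hsum : lam + mu = 1 := by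
    rw [hlam, hmu, ← add_div, div_eq_one_iff_eq hT.ne']
    ring
  have hbL : (0:ℝ) ≤ b + L := by linarith
  have hb' : (0:ℝ) ≤ b := le_trans ha hab
  have e1 : lam • a + mu • (b + L) = a + L := by
    simp only [smul_eq_mul, hlam, hmu]
    field_simp
    ring
  have e2 : mu • a + lam • (b + L) = b := by
    simp only [smul_eq_mul, hlam, hmu]
    field_simp
    ring
  have h1 := hf.2 (Set.mem_Ici.2 ha) (Set.mem_Ici.2 hbL) hlam0 hmu0 hsum
  have h2 := hf.2 (Set.mem_Ici.2 ha) (Set.mem_Ici.2 hbL) hmu0 hlam0 (by linarith)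
  rw [e1] at h1
  rw [e2] at h2
  simp only [smul_eq_mul] at h1 h2
  have hsum' : lam * (f a + f (b + L)) + mu * (f a + f (b + L)) = f a + f (b + L) := by
    rw [← add_mul, hsum, one_mul]
  nlinarith [h1, h2, hsum']

lemma aux_deriv_odd {V : ℝ → ℝ} (hVeven : ∀ x, V (-x) = V x) (hVdiff : Differentiable ℝ V)
    (x : ℝ) : deriv V (-x) = - deriv V x := by
  have hfun : (fun y => V (-y)) = V := funext hVeven
  have hx : HasDerivAt (fun y => V (-y)) (deriv V (-x) * -1) x :=
    HasDerivAt.comp x (hVdiff (-x)).hasDerivAt (hasDerivAt_neg x)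
  rw [hfun] at hx
  have := hx.deriv
  linarith [this]

lemma aux_deriv_zero {V : ℝ → ℝ} (hVeven : ∀ x, V (-x) = V x) (hVdiff : Differentiable ℝ V) :
    deriv V 0 = 0 := by
  have := aux_deriv_odd hVeven hVdiff 0
  rw [neg_zero] at this
  linarith

lemma aux_phi_mono {V : ℝ → ℝ} (hVeven : ∀ x, V (-x) = V x) (hVdiff : Differentiable ℝ V)
    (hV'conv : ConvexOn ℝ (Set.Ici 0) (deriv V)) {m t₁ t₂ : ℝ} (hm : 0 ≤ m)
    (ht₁ : 0 ≤ t₁) (h12 : t₁ ≤ t₂) :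
    deriv V (m + t₁) + deriv V (m - t₁) ≤ deriv V (m + t₂) + deriv V (m - t₂) := by
  set f := deriv V with hf
  have hodd : ∀ x, f (-x) = - f x := aux_deriv_odd hVeven hVdiff
  have hzero : f 0 = 0 := aux_deriv_zero hVeven hVdiff
  have ht₂ : 0 ≤ t₂ := le_trans ht₁ h12
  rcases le_or_gt t₂ m with hc1 | hc1
  · -- t₂ ≤ m
    have key := aux_convex_increment hV'conv (a := m - t₂) (b := m + t₁) (L := t₂ - t₁)
      (by linarith) (by linarith) (by linarith)
    have e1 : m - t₂ + (t₂ - t₁) = m - t₁ := by ring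
    have e2 : m + t₁ + (t₂ - t₁) = m + t₂ := by ring
    rw [e1, e2] at key
    linarith
  rcases le_or_gt m t₁ with hc2 | hc2
  · -- m ≤ t₁
    have o1 : f (m - t₁) = - f (t₁ - m) := by
      have := hodd (t₁ - m); rw [show -(t₁ - m) = m - t₁ by ring] at this; linarith
    have o2 : f (m - t₂) = - f (t₂ - m) := by
      have := hodd (t₂ - m); rw [show -(t₂ - m) = m - t₂ by ring] at this; linarith
    have key := aux_convex_increment hV'conv (a := t₁ - m) (b := m + t₁) (L := t₂ - t₁)
      (by linarith) (by linarith) (by linarith)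
    have e1 : t₁ - m + (t₂ - t₁) = t₂ - m := by ring
    have e2 : m + t₁ + (t₂ - t₁) = m + t₂ := by ring
    rw [e1, e2] at key
    linarith
  · -- t₁ < m < t₂
    have o2 : f (m - t₂) = - f (t₂ - m) := by
      have := hodd (t₂ - m); rw [show -(t₂ - m) = m - t₂ by ring] at this; linarith
    have key1 := aux_convex_increment hV'conv (a := 0) (b := m - t₁) (L := t₂ - m)
      le_rfl (by linarith) (by linarith)
    have key2 := aux_convex_increment hV'conv (a := 0) (b := m + t₁) (L := t₂ - t₁)
      le_rfl (by linarith) (by linarith)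
    rw [zero_add, hzero] at key1 key2
    have e1 : m - t₁ + (t₂ - m) = t₂ - t₁ := by ring
    have e2 : m + t₁ + (t₂ - t₁) = m + t₂ := by ring
    rw [e1] at key1
    rw [e2] at key2
    linarith

lemma aux_G_hasDeriv {V : ℝ → ℝ} (hVdiff : Differentiable ℝ V) (m t : ℝ) :
    HasDerivAt (fun t => V (m + t) - V (m - t)) (deriv V (m + t) + deriv V (m - t)) t := by
  have h₁ : HasDerivAt (fun t : ℝ => V (m + t)) (deriv V (m + t) * 1) t :=
    HasDerivAt.comp t (hVdiff (m + t)).hasDerivAt ((hasDerivAt_id t).const_add m)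
  have h₂ : HasDerivAt (fun t : ℝ => V (m - t)) (deriv V (m - t) * -1) t :=
    HasDerivAt.comp t (hVdiff (m - t)).hasDerivAt ((hasDerivAt_id t).const_sub m)
  refine (h₁.sub h₂).congr_deriv ?_
  ring

lemma aux_G_convex {V : ℝ → ℝ} (hVeven : ∀ x, V (-x) = V x) (hVdiff : Differentiable ℝ V)
    (hV'conv : ConvexOn ℝ (Set.Ici 0) (deriv V)) {m : ℝ} (hm : 0 ≤ m) :
    ConvexOn ℝ (Ici 0) (fun t => V (m + t) - V (m - t)) := by
  apply MonotoneOn.convexOn_of_deriv (convex_Ici 0)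
  · apply Continuous.continuousOn
    exact (hVdiff.continuous.comp (by continuity)).sub (hVdiff.continuous.comp (by continuity))
  · intro t _
    exact (aux_G_hasDeriv hVdiff m t).differentiableAt.differentiableWithinAt
  · intro a ha b hb hab
    rw [(aux_G_hasDeriv hVdiff m a).deriv, (aux_G_hasDeriv hVdiff m b).deriv]
    rw [interior_Ici] at ha hb
    exact aux_phi_mono hVeven hVdiff hV'conv hm (le_of_lt ha) hab

lemma aux_linear_sub_concave {G : ℝ → ℝ} (hG : ConvexOn ℝ (Ici 0) G) (c : ℝ) :
    ConcaveOn ℝ (Ici 0) (fun t => c * t - G t) := by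
  have h2 : ConcaveOn ℝ (Ici 0) (fun t : ℝ => c * t) := by
    refine ⟨convex_Ici 0, ?_⟩
    intro x _ y _ a b _ _ _
    simp only [smul_eq_mul]
    apply le_of_eq
    ring
  exact h2.sub hG

lemma aux_single_crossing {D ψ : ℝ → ℝ}
    (hψc : ConcaveOn ℝ (Ici 0) ψ) (hψ0 : ψ 0 = 0)
    (hsign : ∀ t, 0 ≤ t → (0 ≤ D t ↔ 0 ≤ ψ t))
    (hsign' : ∀ t, 0 ≤ t → (D t ≤ 0 ↔ ψ t ≤ 0))
    (hodd : ∀ t, D (-t) = - D t)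
    (hint1 : Integrable (fun t => t * D t))
    (hint3 : Integrable (fun t => t ^ 3 * D t))
    (hzero : ∫ t, t * D t = 0) :
    ∫ t, t ^ 3 * D t ≤ 0 := by
  by_cases hS : {t : ℝ | 0 ≤ t ∧ ψ t < 0}.Nonempty
  · set S := {t : ℝ | 0 ≤ t ∧ ψ t < 0} with hSdef
    have hbdd : BddBelow S := ⟨0, fun x hx => hx.1⟩
    set t₀ : ℝ := sInf S with ht₀def
    have ht₀0 : 0 ≤ t₀ := le_csInf hS fun x hx => hx.1
    have claim : ∀ t, 0 ≤ t → t ^ 3 * D t ≤ t₀ ^ 2 * (t * D t) := by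
      intro t ht
      rcases lt_trichotomy t t₀ with hlt | rfl | hgt
      · have hnotS : t ∉ S := fun hmem => absurd (csInf_le hbdd hmem) (not_le.2 hlt)
        have hψt : 0 ≤ ψ t := by
          by_contra hneg
          exact hnotS ⟨ht, not_le.1 hneg⟩
        have hDt : 0 ≤ D t := (hsign t ht).2 hψt
        have h1 : t ^ 3 ≤ t₀ ^ 2 * t := by
          have hp : 0 ≤ t * ((t₀ - t) * (t₀ + t)) :=
            mul_nonneg ht (mul_nonneg (by linarith) (by linarith))
          nlinarith [hp]
        calc t ^ 3 * D t ≤ (t₀ ^ 2 * t) * D t := mul_le_mul_of_nonneg_right h1 hDt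
          _ = t₀ ^ 2 * (t * D t) := by ring
      · apply le_of_eq; ring
      · have htpos : 0 < t := lt_of_le_of_lt ht₀0 hgt
        obtain ⟨a, haS, hat⟩ := exists_lt_of_csInf_lt hS hgt
        have ha0 : 0 ≤ a := haS.1
        have haψ : ψ a < 0 := haS.2
        have hapos : 0 < a := by
          rcases eq_or_lt_of_le ha0 with rfl | h
          · exact absurd hψ0 (ne_of_lt haψ)
          · exact h
        have hψt : ψ t < 0 := by
          have hcoef1 : (0:ℝ) ≤ 1 - a / t := by
            have : a / t ≤ 1 := (div_le_one htpos).2 hat.le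
            linarith
          have hcoef2 : (0:ℝ) ≤ a / t := by positivity
          have hconc := hψc.2 (Set.mem_Ici.2 (le_refl (0:ℝ))) (Set.mem_Ici.2 htpos.le)
            hcoef1 hcoef2 (by ring)
          have e : (1 - a / t) • (0:ℝ) + (a / t) • t = a := by
            simp only [smul_eq_mul]
            field_simp
            ring
          rw [e, hψ0] at hconc
          simp only [smul_eq_mul, mul_zero, zero_add] at hconc
          by_contra hge
          push_neg at hge
          have : 0 ≤ a / t * ψ t := mul_nonneg hcoef2 hge
          linarith
        have hDt : D t ≤ 0 := (hsign' t ht).2 hψt.le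
        have h1 : t₀ ^ 2 * t ≤ t ^ 3 := by
          have hp : 0 ≤ t * ((t - t₀) * (t + t₀)) :=
            mul_nonneg ht (mul_nonneg (by linarith) (by linarith))
          nlinarith [hp]
        calc t ^ 3 * D t ≤ (t₀ ^ 2 * t) * D t := mul_le_mul_of_nonpos_right h1 hDt
          _ = t₀ ^ 2 * (t * D t) := by ring
    have claim' : ∀ t, t ^ 3 * D t ≤ t₀ ^ 2 * (t * D t) := by
      intro t
      rcases le_or_gt 0 t with ht | ht
      · exact claim t ht
      · have := claim (-t) (by linarith)
        rw [hodd t] at this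
        ring_nf at this ⊢
        linarith
    calc ∫ t, t ^ 3 * D t ≤ ∫ t, t₀ ^ 2 * (t * D t) :=
          integral_mono hint3 (hint1.const_mul _) claim'
      _ = t₀ ^ 2 * ∫ t, t * D t := integral_const_mul _ _
      _ = 0 := by rw [hzero, mul_zero]
  · have hS' : ∀ t, ¬ (0 ≤ t ∧ ψ t < 0) := fun t ht => hS ⟨t, ht⟩
    have hnn : ∀ t, 0 ≤ t * D t := by
      intro t
      rcases le_or_gt 0 t with ht | ht
      · have hψt : 0 ≤ ψ t := not_lt.1 fun hc => hS' t ⟨ht, hc⟩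
        exact mul_nonneg ht ((hsign t ht).2 hψt)
      · have h2 : 0 ≤ -t := by linarith
        have hψt : 0 ≤ ψ (-t) := not_lt.1 fun hc => hS' (-t) ⟨h2, hc⟩
        have hD : 0 ≤ D (-t) := (hsign (-t) h2).2 hψt
        have : D (-t) = - D t := hodd t
        nlinarith
    have hae : (fun t => t * D t) =ᵐ[volume] 0 :=
      (integral_eq_zero_iff_of_nonneg hnn hint1).1 hzero
    have hae3 : (fun t => t ^ 3 * D t) =ᵐ[volume] 0 := by
      filter_upwards [hae] with t ht
      simp only [Pi.zero_apply] at ht ⊢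
      have : t ^ 3 * D t = t ^ 2 * (t * D t) := by ring
      rw [this, ht, mul_zero]
    have hz : ∫ t, t ^ 3 * D t = 0 := by
      rw [integral_congr_ae hae3]
      simp
    linarith [hz]

noncomputable def auxv (V : ℝ → ℝ) (d h : ℝ) : ℝ :=
  auxM V d 2 h / auxM V d 0 h - (auxM V d 1 h / auxM V d 0 h) ^ 2

noncomputable def auxm (V : ℝ → ℝ) (d h : ℝ) : ℝ := auxM V d 1 h / auxM V d 0 h

noncomputable def auxT (V : ℝ → ℝ) (d h : ℝ) : ℝ :=
  ∫ x, (x - auxm V d h) ^ 3 * Real.exp (h * x - d / 2 * x ^ 2 - V x)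

section E
variable {V : ℝ → ℝ} {d : ℝ} (hd : 0 < d) (hVcont : Continuous V)
  (hVint : Integrable (fun x => Real.exp (-V x)))

include hd hVcont hVint

lemma auxM_zero_pos (h : ℝ) : 0 < auxM V d 0 h := by
  have hint := aux_integrable_pow hd hVcont hVint 0 h
  have hnn : ∀ x : ℝ, 0 ≤ x ^ (0:ℕ) * Real.exp (h * x - d / 2 * x ^ 2 - V x) := by
    intro x; rw [pow_zero, one_mul]; positivity
  unfold auxM
  rw [integral_pos_iff_support_of_nonneg hnn hint]
  have hs : Function.support
      (fun x : ℝ => x ^ (0:ℕ) * Real.exp (h * x - d / 2 * x ^ 2 - V x)) = Set.univ := by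
    ext x
    simp [Function.mem_support, Real.exp_ne_zero]
  rw [hs, Real.volume_univ]
  exact ENNReal.zero_lt_top

omit hVcont hVint hd in
lemma auxM_parity (hVeven : ∀ x, V (-x) = V x) (k : ℕ) (h : ℝ) :
    auxM V d k (-h) = (-1) ^ k * auxM V d k h := by
  have key : ∀ x : ℝ,
      (fun x : ℝ => x ^ k * Real.exp (-h * x - d / 2 * x ^ 2 - V x)) (-x)
      = (-1) ^ k * (x ^ k * Real.exp (h * x - d / 2 * x ^ 2 - V x)) := by
    intro x
    simp only
    rw [hVeven, neg_pow, neg_sq]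
    ring_nf
  calc auxM V d k (-h)
      = ∫ x, (fun x : ℝ => x ^ k * Real.exp (-h * x - d / 2 * x ^ 2 - V x)) (-x) :=
        (integral_neg_eq_self _ _).symm
    _ = ∫ x, (-1:ℝ) ^ k * (x ^ k * Real.exp (h * x - d / 2 * x ^ 2 - V x)) := by
        simp only [key]
    _ = (-1) ^ k * auxM V d k h := integral_const_mul _ _

lemma auxM_one_nonneg (hVeven : ∀ x, V (-x) = V x) {h : ℝ} (hh : 0 ≤ h) :
    0 ≤ auxM V d 1 h := by
  have hpar := auxM_parity (d := d) hVeven 1 h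
  have hint₁ := aux_integrable_pow hd hVcont hVint 1 h
  have hint₂ := aux_integrable_pow hd hVcont hVint 1 (-h)
  have hsub : auxM V d 1 h - auxM V d 1 (-h) =
      ∫ x, (x ^ (1:ℕ) * Real.exp (h * x - d / 2 * x ^ 2 - V x)
        - x ^ (1:ℕ) * Real.exp (-h * x - d / 2 * x ^ 2 - V x)) := (integral_sub hint₁ hint₂).symm
  have hnn : ∀ x : ℝ, 0 ≤ x ^ (1:ℕ) * Real.exp (h * x - d / 2 * x ^ 2 - V x)
      - x ^ (1:ℕ) * Real.exp (-h * x - d / 2 * x ^ 2 - V x) := by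
    intro x
    rw [pow_one, ← mul_sub]
    rcases le_or_gt 0 x with hx | hx
    · apply mul_nonneg hx
      rw [sub_nonneg, Real.exp_le_exp]
      nlinarith
    · have hsub : Real.exp (h * x - d / 2 * x ^ 2 - V x)
          - Real.exp (-h * x - d / 2 * x ^ 2 - V x) ≤ 0 := by
        rw [sub_nonpos, Real.exp_le_exp]
        nlinarith
      nlinarith [mul_nonneg (neg_nonneg.2 hx.le) (neg_nonneg.2 hsub)]
  have h2 : 0 ≤ auxM V d 1 h - auxM V d 1 (-h) := hsub ▸ integral_nonneg hnn
  rw [hpar] at h2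
  simp only [pow_one, neg_one_mul] at h2
  linarith

lemma aux_integrable_shift1 (m h : ℝ) :
    Integrable (fun x => (x - m) * Real.exp (h * x - d / 2 * x ^ 2 - V x)) := by
  have i0 := aux_integrable_pow hd hVcont hVint 0 h
  have i1 := aux_integrable_pow hd hVcont hVint 1 h
  have : (fun x => (x - m) * Real.exp (h * x - d / 2 * x ^ 2 - V x))
      = fun x => x ^ (1:ℕ) * Real.exp (h * x - d / 2 * x ^ 2 - V x)
        - m * (x ^ (0:ℕ) * Real.exp (h * x - d / 2 * x ^ 2 - V x)) := by
    funext x; ring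
  rw [this]
  exact i1.sub (i0.const_mul m)

lemma aux_integrable_shift3 (m h : ℝ) :
    Integrable (fun x => (x - m) ^ 3 * Real.exp (h * x - d / 2 * x ^ 2 - V x)) := by
  have i0 := aux_integrable_pow hd hVcont hVint 0 h
  have i1 := aux_integrable_pow hd hVcont hVint 1 h
  have i2 := aux_integrable_pow hd hVcont hVint 2 h
  have i3 := aux_integrable_pow hd hVcont hVint 3 h
  have : (fun x => (x - m) ^ 3 * Real.exp (h * x - d / 2 * x ^ 2 - V x))
      = fun x => x ^ (3:ℕ) * Real.exp (h * x - d / 2 * x ^ 2 - V x)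
        - 3 * m * (x ^ (2:ℕ) * Real.exp (h * x - d / 2 * x ^ 2 - V x))
        + 3 * m ^ 2 * (x ^ (1:ℕ) * Real.exp (h * x - d / 2 * x ^ 2 - V x))
        - m ^ 3 * (x ^ (0:ℕ) * Real.exp (h * x - d / 2 * x ^ 2 - V x)) := by
    funext x; ring
  rw [this]
  exact ((i3.sub (i2.const_mul _)).add (i1.const_mul _)).sub (i0.const_mul _)

lemma aux_expand1 (m h : ℝ) :
    ∫ x, (x - m) * Real.exp (h * x - d / 2 * x ^ 2 - V x)
      = auxM V d 1 h - m * auxM V d 0 h := by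
  have i0 := aux_integrable_pow hd hVcont hVint 0 h
  have i1 := aux_integrable_pow hd hVcont hVint 1 h
  have : (fun x => (x - m) * Real.exp (h * x - d / 2 * x ^ 2 - V x))
      = fun x => x ^ (1:ℕ) * Real.exp (h * x - d / 2 * x ^ 2 - V x)
        - m * (x ^ (0:ℕ) * Real.exp (h * x - d / 2 * x ^ 2 - V x)) := by
    funext x; ring
  rw [this, integral_sub i1 (i0.const_mul m), integral_const_mul]
  rfl

lemma aux_expand3 (m h : ℝ) :
    ∫ x, (x - m) ^ 3 * Real.exp (h * x - d / 2 * x ^ 2 - V x)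
      = auxM V d 3 h - 3 * m * auxM V d 2 h + 3 * m ^ 2 * auxM V d 1 h
        - m ^ 3 * auxM V d 0 h := by
  have i0 := aux_integrable_pow hd hVcont hVint 0 h
  have i1 := aux_integrable_pow hd hVcont hVint 1 h
  have i2 := aux_integrable_pow hd hVcont hVint 2 h
  have i3 := aux_integrable_pow hd hVcont hVint 3 h
  have e : (fun x => (x - m) ^ 3 * Real.exp (h * x - d / 2 * x ^ 2 - V x))
      = fun x => x ^ (3:ℕ) * Real.exp (h * x - d / 2 * x ^ 2 - V x)
        - 3 * m * (x ^ (2:ℕ) * Real.exp (h * x - d / 2 * x ^ 2 - V x))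
        + 3 * m ^ 2 * (x ^ (1:ℕ) * Real.exp (h * x - d / 2 * x ^ 2 - V x))
        - m ^ 3 * (x ^ (0:ℕ) * Real.exp (h * x - d / 2 * x ^ 2 - V x)) := by
    funext x; ring
  have hA : Integrable (fun x => x ^ (3:ℕ) * Real.exp (h * x - d / 2 * x ^ 2 - V x)
      - 3 * m * (x ^ (2:ℕ) * Real.exp (h * x - d / 2 * x ^ 2 - V x))) :=
    i3.sub (i2.const_mul _)
  have hB : Integrable (fun x => x ^ (3:ℕ) * Real.exp (h * x - d / 2 * x ^ 2 - V x)
      - 3 * m * (x ^ (2:ℕ) * Real.exp (h * x - d / 2 * x ^ 2 - V x))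
      + 3 * m ^ 2 * (x ^ (1:ℕ) * Real.exp (h * x - d / 2 * x ^ 2 - V x))) :=
    hA.add (i1.const_mul _)
  rw [e, integral_sub hB (i0.const_mul _), integral_add hA (i1.const_mul _),
    integral_sub i3 (i2.const_mul _), integral_const_mul, integral_const_mul, integral_const_mul]
  rfl

end E

section E2
variable {V : ℝ → ℝ} {d : ℝ} (hd : 0 < d) (hVcont : Continuous V)
  (hVint : Integrable (fun x => Real.exp (-V x)))
  (hVeven : ∀ x, V (-x) = V x) (hVdiff : Differentiable ℝ V)
  (hV'conv : ConvexOn ℝ (Set.Ici 0) (deriv V))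

include hd hVcont hVint hVeven hVdiff hV'conv

lemma aux_T_nonpos {h : ℝ} (hh : 0 ≤ h) : auxT V d h ≤ 0 := by
  set ρ : ℝ → ℝ := fun x => Real.exp (h * x - d / 2 * x ^ 2 - V x) with hρdef
  set m : ℝ := auxm V d h with hmdef
  have hM0 : 0 < auxM V d 0 h := auxM_zero_pos hd hVcont hVint h
  have hm0 : 0 ≤ m := div_nonneg (auxM_one_nonneg hd hVcont hVint hVeven hh) hM0.le
  -- translation invariant integrals
  have j1 : Integrable (fun t => t * ρ (m + t)) := by
    refine ((aux_integrable_shift1 hd hVcont hVint m h).comp_add_right m).congr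
      (Eventually.of_forall fun t => ?_)
    show (t + m - m) * ρ (t + m) = t * ρ (m + t)
    rw [add_sub_cancel_right, add_comm]
  have j2 : Integrable (fun t => t * ρ (m - t)) := by
    refine (j1.comp_neg).neg.congr (Eventually.of_forall fun t => ?_)
    show -((-t) * ρ (m + -t)) = t * ρ (m - t)
    rw [show m + -t = m - t by ring]
    ring
  have k1 : Integrable (fun t => t ^ 3 * ρ (m + t)) := by
    refine ((aux_integrable_shift3 hd hVcont hVint m h).comp_add_right m).congr
      (Eventually.of_forall fun t => ?_)
    show (t + m - m) ^ 3 * ρ (t + m) = t ^ 3 * ρ (m + t)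
    rw [add_sub_cancel_right, add_comm]
  have k2 : Integrable (fun t => t ^ 3 * ρ (m - t)) := by
    refine (k1.comp_neg).neg.congr (Eventually.of_forall fun t => ?_)
    show -((-t) ^ 3 * ρ (m + -t)) = t ^ 3 * ρ (m - t)
    rw [show m + -t = m - t by ring]
    ring
  -- translation identities
  have t1 : ∫ t, t * ρ (m + t) = ∫ x, (x - m) * ρ x := by
    have e : (fun t => t * ρ (m + t)) = fun t => (fun x => (x - m) * ρ x) (t + m) := by
      funext t
      show t * ρ (m + t) = (t + m - m) * ρ (t + m)
      rw [add_sub_cancel_right, add_comm]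
    rw [e]
    exact integral_add_right_eq_self (fun x => (x - m) * ρ x) m
  have t2 : ∫ t, t * ρ (m - t) = - ∫ x, (x - m) * ρ x := by
    have e : (fun t => -(t * ρ (m + t))) = fun t => (fun s => s * ρ (m - s)) (-t) := by
      funext t
      show -(t * ρ (m + t)) = (-t) * ρ (m - -t)
      rw [show m - -t = m + t by ring]
      ring
    calc ∫ t, t * ρ (m - t) = ∫ t, (fun s => s * ρ (m - s)) (-t) :=
          (integral_neg_eq_self _ _).symm
      _ = ∫ t, -(t * ρ (m + t)) := by rw [← e]
      _ = - ∫ t, t * ρ (m + t) := integral_neg _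
      _ = - ∫ x, (x - m) * ρ x := by rw [t1]
  have s1 : ∫ t, t ^ 3 * ρ (m + t) = auxT V d h := by
    have e : (fun t => t ^ 3 * ρ (m + t)) = fun t => (fun x => (x - m) ^ 3 * ρ x) (t + m) := by
      funext t
      show t ^ 3 * ρ (m + t) = (t + m - m) ^ 3 * ρ (t + m)
      rw [add_sub_cancel_right, add_comm]
    rw [e]
    exact (integral_add_right_eq_self (fun x => (x - m) ^ 3 * ρ x) m).trans rfl
  have s2 : ∫ t, t ^ 3 * ρ (m - t) = - auxT V d h := by
    have e : (fun t => -(t ^ 3 * ρ (m + t))) = fun t => (fun s => s ^ 3 * ρ (m - s)) (-t) := by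
      funext t
      show -(t ^ 3 * ρ (m + t)) = (-t) ^ 3 * ρ (m - -t)
      rw [show m - -t = m + t by ring]
      ring
    calc ∫ t, t ^ 3 * ρ (m - t) = ∫ t, (fun s => s ^ 3 * ρ (m - s)) (-t) :=
          (integral_neg_eq_self _ _).symm
      _ = ∫ t, -(t ^ 3 * ρ (m + t)) := by rw [← e]
      _ = - ∫ t, t ^ 3 * ρ (m + t) := integral_neg _
      _ = - auxT V d h := by rw [s1]
  -- the first moment vanishes
  have hfirst : ∫ x, (x - m) * ρ x = 0 := by
    rw [hρdef, aux_expand1 hd hVcont hVint m h, hmdef]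
    unfold auxm
    field_simp
    ring
  -- apply the single-crossing lemma
  have hAB : ∀ t : ℝ, (h * (m + t) - d / 2 * (m + t) ^ 2 - V (m + t))
      - (h * (m - t) - d / 2 * (m - t) ^ 2 - V (m - t))
      = (2 * h - 2 * d * m) * t - (V (m + t) - V (m - t)) := fun t => by ring
  have key := aux_single_crossing
    (D := fun t => ρ (m + t) - ρ (m - t))
    (ψ := fun t => (2 * h - 2 * d * m) * t - (V (m + t) - V (m - t)))
    (aux_linear_sub_concave (aux_G_convex hVeven hVdiff hV'conv hm0) _)
    (by simp)
    (fun t _ => by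
      show 0 ≤ ρ (m + t) - ρ (m - t) ↔ _
      rw [sub_nonneg, hρdef]
      simp only []
      rw [Real.exp_le_exp, ← sub_nonneg, hAB t])
    (fun t _ => by
      show ρ (m + t) - ρ (m - t) ≤ 0 ↔ _
      rw [sub_nonpos, hρdef]
      simp only []
      rw [Real.exp_le_exp, ← sub_nonpos]
      constructor
      · intro hle; linarith [hAB t]
      · intro hle; linarith [hAB t])
    (fun t => by
      show ρ (m + -t) - ρ (m - -t) = -(ρ (m + t) - ρ (m - t))
      rw [show m + -t = m - t by ring, show m - -t = m + t by ring]
      ring)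
    ((j1.sub j2).congr (Eventually.of_forall fun t => by
      show t * ρ (m + t) - t * ρ (m - t) = t * (ρ (m + t) - ρ (m - t))
      ring))
    ((k1.sub k2).congr (Eventually.of_forall fun t => by
      show t ^ 3 * ρ (m + t) - t ^ 3 * ρ (m - t) = t ^ 3 * (ρ (m + t) - ρ (m - t))
      ring))
    (by
      have : (fun t => t * (ρ (m + t) - ρ (m - t)))
          = fun t => t * ρ (m + t) - t * ρ (m - t) := by funext t; ring
      rw [this, integral_sub j1 j2, t1, t2, hfirst]
      ring)
  have hsplit : ∫ t, t ^ 3 * (ρ (m + t) - ρ (m - t))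
      = (∫ t, t ^ 3 * ρ (m + t)) - ∫ t, t ^ 3 * ρ (m - t) := by
    have : (fun t => t ^ 3 * (ρ (m + t) - ρ (m - t)))
        = fun t => t ^ 3 * ρ (m + t) - t ^ 3 * ρ (m - t) := by funext t; ring
    rw [this, integral_sub k1 k2]
  rw [hsplit, s1, s2] at key
  linarith

lemma aux_hasDerivAt_v (h₀ : ℝ) :
    HasDerivAt (auxv V d) (auxT V d h₀ / auxM V d 0 h₀) h₀ := by
  have hZ := aux_hasDerivAt_M hd hVcont hVint 0 h₀
  have hM1 := aux_hasDerivAt_M hd hVcont hVint 1 h₀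
  have hM2 := aux_hasDerivAt_M hd hVcont hVint 2 h₀
  have hZpos := auxM_zero_pos hd hVcont hVint h₀
  have q2 := hM2.div hZ hZpos.ne'
  have q1 := hM1.div hZ hZpos.ne'
  have q1sq := q1.pow 2
  have hv := q2.sub q1sq
  have hexp : auxT V d h₀ = auxM V d 3 h₀ - 3 * auxm V d h₀ * auxM V d 2 h₀
      + 3 * (auxm V d h₀) ^ 2 * auxM V d 1 h₀ - (auxm V d h₀) ^ 3 * auxM V d 0 h₀ :=
    aux_expand3 hd hVcont hVint _ h₀
  refine hv.congr_deriv ?_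
  rw [hexp]
  unfold auxm
  norm_num
  field_simp
  ring

lemma aux_v_even (h : ℝ) : auxv V d (-h) = auxv V d h := by
  unfold auxv
  rw [auxM_parity (d := d) hVeven 2 h, auxM_parity (d := d) hVeven 1 h,
    auxM_parity (d := d) hVeven 0 h]
  simp [neg_div, neg_sq]

lemma aux_v_le (h : ℝ) : auxv V d h ≤ auxv V d 0 := by
  have hanti : AntitoneOn (auxv V d) (Ici 0) := by
    apply antitoneOn_of_deriv_nonpos (convex_Ici 0)
    · exact Differentiable.continuous
        (fun x => (aux_hasDerivAt_v hd hVcont hVint hVeven hVdiff hV'conv x).differentiableAt)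
        |>.continuousOn
    · intro x _
      exact (aux_hasDerivAt_v hd hVcont hVint hVeven hVdiff hV'conv x).differentiableAt
        |>.differentiableWithinAt
    · intro x hx
      rw [interior_Ici] at hx
      rw [(aux_hasDerivAt_v hd hVcont hVint hVeven hVdiff hV'conv x).deriv]
      exact div_nonpos_iff.2 (Or.inr
        ⟨aux_T_nonpos hd hVcont hVint hVeven hVdiff hV'conv (le_of_lt hx),
          (auxM_zero_pos hd hVcont hVint x).le⟩)
  rcases le_or_gt 0 h with hh | hh
  · exact hanti (mem_Ici.2 le_rfl) (mem_Ici.2 hh) hh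
  · calc auxv V d h = auxv V d (-(-h)) := by rw [neg_neg]
      _ = auxv V d (-h) := aux_v_even hd hVcont hVint hVeven hVdiff hV'conv (-h)
      _ ≤ auxv V d 0 := hanti (mem_Ici.2 le_rfl) (mem_Ici.2 (by linarith)) (by linarith)

end E2

/-- Integral against a normalized density measure. -/
lemma aux_integral_density (ρ : ℝ → ℝ) (hρcont : Continuous ρ) (hρpos : ∀ x, 0 < ρ x)
    (hZ : 0 < ∫ x, ρ x) (g : ℝ → ℝ) :
    ∫ x, g x ∂((ENNReal.ofReal (∫ x, ρ x))⁻¹ •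
      (volume.withDensity fun x => ENNReal.ofReal (ρ x)))
    = (∫ x, ρ x)⁻¹ * ∫ x, g x * ρ x := by
  rw [integral_smul_measure]
  have h1 : ((ENNReal.ofReal (∫ x, ρ x))⁻¹).toReal = (∫ x, ρ x)⁻¹ := by
    rw [ENNReal.toReal_inv, ENNReal.toReal_ofReal hZ.le]
  have h2 : ∫ x, g x ∂(volume.withDensity fun x => ENNReal.ofReal (ρ x))
      = ∫ x, g x * ρ x := by
    have hd : (fun x => ENNReal.ofReal (ρ x))
        = fun x => ((Real.toNNReal (ρ x) : ℝ≥0) : ℝ≥0∞) := rfl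
    rw [hd, integral_withDensity_eq_integral_smul
      (hρcont.measurable.real_toNNReal) g]
    apply integral_congr_ae
    filter_upwards with x
    rw [NNReal.smul_def, Real.coe_toNNReal _ (hρpos x).le, smul_eq_mul, mul_comm]
  rw [h1, h2, smul_eq_mul]


lemma aux_isProb_density (ρ : ℝ → ℝ) (hρcont : Continuous ρ) (hρpos : ∀ x, 0 < ρ x)
    (hρint : Integrable ρ) (hZ : 0 < ∫ x, ρ x) :
    IsProbabilityMeasure ((ENNReal.ofReal (∫ x, ρ x))⁻¹ •
      (volume.withDensity fun x => ENNReal.ofReal (ρ x))) := by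
  constructor
  rw [Measure.smul_apply, smul_eq_mul]
  have h1 : (volume.withDensity fun x => ENNReal.ofReal (ρ x)) Set.univ
      = ENNReal.ofReal (∫ x, ρ x) := by
    rw [withDensity_apply _ MeasurableSet.univ, Measure.restrict_univ,
      ← ofReal_integral_eq_lintegral_ofReal hρint (Eventually.of_forall fun x => (hρpos x).le)]
  rw [h1, ENNReal.inv_mul_cancel (ENNReal.ofReal_pos.2 hZ).ne' ENNReal.ofReal_ne_top]

lemma aux_variance_density (ρ : ℝ → ℝ) (hρcont : Continuous ρ) (hρpos : ∀ x, 0 < ρ x)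
    (hρint : Integrable ρ) (hx1 : Integrable (fun x => x * ρ x))
    (hx2 : Integrable (fun x => x ^ 2 * ρ x)) (hZ : 0 < ∫ x, ρ x) :
    variance id ((ENNReal.ofReal (∫ x, ρ x))⁻¹ •
      (volume.withDensity fun x => ENNReal.ofReal (ρ x)))
    = (∫ x, x ^ 2 * ρ x) / (∫ x, ρ x) - ((∫ x, x * ρ x) / (∫ x, ρ x)) ^ 2 := by
  set μ := (ENNReal.ofReal (∫ x, ρ x))⁻¹ •
      (volume.withDensity fun x => ENNReal.ofReal (ρ x)) with hμdef
  haveI : IsProbabilityMeasure μ := aux_isProb_density ρ hρcont hρpos hρint hZ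
  have hdmeas : Measurable fun x => ENNReal.ofReal (ρ x) :=
    hρcont.measurable.ennreal_ofReal
  have hsq : Integrable (fun x : ℝ => x ^ 2) μ := by
    rw [hμdef]
    rw [integrable_smul_measure (ENNReal.inv_ne_zero.2 ENNReal.ofReal_ne_top)
      (ENNReal.inv_ne_top.2 (ENNReal.ofReal_pos.2 hZ).ne')]
    rw [integrable_withDensity_iff hdmeas (Eventually.of_forall fun x => ENNReal.ofReal_lt_top)]
    refine hx2.congr (Eventually.of_forall fun x => ?_)
    show x ^ 2 * ρ x = x ^ 2 * (ENNReal.ofReal (ρ x)).toReal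
    rw [ENNReal.toReal_ofReal (hρpos x).le]
  have hmem : MemLp (id : ℝ → ℝ) 2 μ := by
    rw [memLp_two_iff_integrable_sq aestronglyMeasurable_id]
    exact hsq.congr (Eventually.of_forall fun x => by simp)
  rw [variance_eq_sub hmem]
  have e2 : μ[(id : ℝ → ℝ) ^ 2] = (∫ x, x ^ 2 * ρ x) * (∫ x, ρ x)⁻¹ := by
    have : ((id : ℝ → ℝ) ^ 2) = fun x : ℝ => x ^ 2 := by funext x; simp
    rw [this, hμdef, aux_integral_density ρ hρcont hρpos hZ]
    ring
  have e1 : μ[(id : ℝ → ℝ)] = (∫ x, x * ρ x) * (∫ x, ρ x)⁻¹ := by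
    have : (id : ℝ → ℝ) = fun x : ℝ => x := rfl
    rw [this, hμdef, aux_integral_density ρ hρcont hρpos hZ]
    ring
  rw [e1, e2]
  field_simp

section G
variable {V : ℝ → ℝ} {d : ℝ} (hd : 0 < d) (hVcont : Continuous V)
  (hVint : Integrable (fun x => Real.exp (-V x)))

include hd hVcont hVint

lemma aux_rho_int_eq (h : ℝ) :
    ∫ x, Real.exp (h * x - d / 2 * x ^ 2 - V x) = auxM V d 0 h := by
  unfold auxM
  apply integral_congr_ae
  filter_upwards with x
  simp

lemma aux_exp_negV_pos : 0 < ∫ x, Real.exp (-V x) := by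
  rw [integral_pos_iff_support_of_nonneg (fun x => (Real.exp_pos _).le) hVint]
  have hs : Function.support (fun x : ℝ => Real.exp (-V x)) = Set.univ := by
    ext x; simp [Function.mem_support, Real.exp_ne_zero]
  rw [hs, Real.volume_univ]
  exact ENNReal.zero_lt_top

lemma aux_tilt_eq {pr : Measure ℝ}
    (hpr : pr = (ENNReal.ofReal (∫ x, Real.exp (-V x)))⁻¹ •
      (MeasureTheory.volume.withDensity fun x => ENNReal.ofReal (Real.exp (-V x))))
    (h : ℝ) :
    tilt pr h d = (ENNReal.ofReal (∫ x, Real.exp (h * x - d / 2 * x ^ 2 - V x)))⁻¹ •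
      (volume.withDensity fun x => ENNReal.ofReal (Real.exp (h * x - d / 2 * x ^ 2 - V x))) := by
  have hZv : 0 < ∫ x, Real.exp (-V x) := aux_exp_negV_pos hd hVcont hVint
  have hM0 : 0 < auxM V d 0 h := auxM_zero_pos hd hVcont hVint h
  have hZρ : 0 < ∫ x, Real.exp (h * x - d / 2 * x ^ 2 - V x) := by
    rw [aux_rho_int_eq hd hVcont hVint h]; exact hM0
  -- compute the cgf
  have hcgf : cgf pr h d = Real.log (auxM V d 0 h) - Real.log (∫ x, Real.exp (-V x)) := by
    unfold _root_.cgf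
    rw [hpr, aux_integral_density (fun x => Real.exp (-V x)) (by fun_prop)
      (fun x => Real.exp_pos _) hZv]
    have he : ∫ x, Real.exp (h * x - d / 2 * x ^ 2) * Real.exp (-V x) = auxM V d 0 h := by
      unfold auxM
      apply integral_congr_ae
      filter_upwards with x
      show Real.exp (h * x - d / 2 * x ^ 2) * Real.exp (-V x)
        = x ^ (0:ℕ) * Real.exp (h * x - d / 2 * x ^ 2 - V x)
      rw [pow_zero, one_mul, ← Real.exp_add]
      ring_nf
    rw [he, Real.log_mul (by positivity) hM0.ne', Real.log_inv]
    ring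
  -- the measure identity
  unfold tilt
  set c : ℝ := _root_.cgf pr h d with hc
  rw [hpr, withDensity_smul_measure]
  have hmV : Measurable fun x => ENNReal.ofReal (Real.exp (-V x)) := by
    apply Measurable.ennreal_ofReal; fun_prop
  have hmk : Measurable fun x => ENNReal.ofReal
      (Real.exp (h * x - d / 2 * x ^ 2 - c)) := by
    apply Measurable.ennreal_ofReal; fun_prop
  rw [← withDensity_mul volume hmV hmk]
  have hprod : ((fun x => ENNReal.ofReal (Real.exp (-V x))) *
      fun x => ENNReal.ofReal (Real.exp (h * x - d / 2 * x ^ 2 - c)))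
      = fun x => ENNReal.ofReal (Real.exp (-(c))) *
          ENNReal.ofReal (Real.exp (h * x - d / 2 * x ^ 2 - V x)) := by
    funext x
    rw [Pi.mul_apply, ← ENNReal.ofReal_mul (Real.exp_pos _).le,
      ← ENNReal.ofReal_mul (Real.exp_pos _).le, ← Real.exp_add, ← Real.exp_add]
    congr 1
    ring
  rw [hprod]
  have hsm := withDensity_smul (μ := volume) (ENNReal.ofReal (Real.exp (-(c))))
    (f := fun x => ENNReal.ofReal (Real.exp (h * x - d / 2 * x ^ 2 - V x)))
    (by apply Measurable.ennreal_ofReal; fun_prop)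
  have hsmf : (ENNReal.ofReal (Real.exp (-(c))) •
      fun x => ENNReal.ofReal (Real.exp (h * x - d / 2 * x ^ 2 - V x)))
      = fun x => ENNReal.ofReal (Real.exp (-(c))) *
          ENNReal.ofReal (Real.exp (h * x - d / 2 * x ^ 2 - V x)) := rfl
  rw [← hsmf, hsm, smul_smul]
  congr 1
  -- constants
  have hec : Real.exp (-c) = (∫ x, Real.exp (-V x)) / auxM V d 0 h := by
    rw [hcgf, neg_sub, Real.exp_sub, Real.exp_log hZv, Real.exp_log hM0]
  rw [hec, aux_rho_int_eq hd hVcont hVint h,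
    ENNReal.ofReal_div_of_pos hM0, div_eq_mul_inv, ← mul_assoc,
    ENNReal.inv_mul_cancel (ENNReal.ofReal_pos.2 hZv).ne' ENNReal.ofReal_ne_top, one_mul]

lemma aux_variance_eq {pr : Measure ℝ}
    (hpr : pr = (ENNReal.ofReal (∫ x, Real.exp (-V x)))⁻¹ •
      (MeasureTheory.volume.withDensity fun x => ENNReal.ofReal (Real.exp (-V x))))
    (h : ℝ) :
    variance id (tilt pr h d) = auxv V d h := by
  have hM0 : 0 < auxM V d 0 h := auxM_zero_pos hd hVcont hVint h
  have hZρ : 0 < ∫ x, Real.exp (h * x - d / 2 * x ^ 2 - V x) := by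
    rw [aux_rho_int_eq hd hVcont hVint h]; exact hM0
  have hint0 : Integrable (fun x => Real.exp (h * x - d / 2 * x ^ 2 - V x)) := by
    refine (aux_integrable_pow hd hVcont hVint 0 h).congr (Eventually.of_forall fun x => ?_)
    simp
  have hint1 : Integrable (fun x => x * Real.exp (h * x - d / 2 * x ^ 2 - V x)) := by
    refine (aux_integrable_pow hd hVcont hVint 1 h).congr (Eventually.of_forall fun x => ?_)
    simp
  have hint2 : Integrable (fun x => x ^ 2 * Real.exp (h * x - d / 2 * x ^ 2 - V x)) :=
    aux_integrable_pow hd hVcont hVint 2 h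
  rw [aux_tilt_eq hd hVcont hVint hpr h,
    aux_variance_density _ (by fun_prop) (fun x => Real.exp_pos _) hint0 hint1 hint2 hZρ]
  unfold auxv
  rw [aux_rho_int_eq hd hVcont hVint h]
  have e1 : ∫ x, x * Real.exp (h * x - d / 2 * x ^ 2 - V x) = auxM V d 1 h := by
    unfold auxM
    apply integral_congr_ae
    filter_upwards with x
    simp
  have e2 : ∫ x, x ^ 2 * Real.exp (h * x - d / 2 * x ^ 2 - V x) = auxM V d 2 h := rfl
  rw [e1, e2]

end G


/-- if `V` is even, nondecreasing on `[0,∞)`, differentiable with `V'` convex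
on `[0,∞)`, `e^{-V}` is Lebesgue integrable, and `π` is the probability measure with density
proportional to `e^{-V}` with respect to Lebesgue measure, then for every `h ∈ ℝ` and `d > 0`
the variance of the tilted measure `π^{(h,d)}` is at most that of `π^{(0,d)}`. -/
theorem stmt6 (V : ℝ → ℝ)
    (hVeven : ∀ x, V (-x) = V x)
    (hVmono : MonotoneOn V (Set.Ici 0))
    (hVdiff : Differentiable ℝ V)
    (hV'conv : ConvexOn ℝ (Set.Ici 0) (deriv V))
    (hVint : Integrable (fun x => Real.exp (-V x)))
    (pr : Measure ℝ)
    (hpr : pr = (ENNReal.ofReal (∫ x, Real.exp (-V x)))⁻¹ •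
      (MeasureTheory.volume.withDensity fun x => ENNReal.ofReal (Real.exp (-V x))))
    (h d : ℝ) (hd : 0 < d) :
    ProbabilityTheory.variance id (tilt pr h d) ≤ ProbabilityTheory.variance id (tilt pr 0 d) := by
  have hVcont : Continuous V := hVdiff.continuous
  rw [aux_variance_eq hd hVcont hVint hpr h, aux_variance_eq hd hVcont hVint hpr 0]
  exact aux_v_le hd hVcont hVint hVeven hVdiff hV'conv h
end

section
/- Let d > 0 and let V : ℝ → ℝ be even, nondecreasing on [0,∞), and measurable, with 0 < ∫_ℝ e^{−V(x) − d x²/2} dx < ∞. Let μ be the probability measure on ℝ whose density with respect to Lebesgue measure is proportional to e^{−V(x) − d x²/2}. Then Var_{X ∼ μ}(X) ≤ 1/d. -/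
open MeasureTheory ProbabilityTheory Filter Set
open scoped NNReal ENNReal

private lemma gauss_second_moment (d : ℝ) (hd : 0 < d) :
    ∫ x : ℝ, x ^ 2 * Real.exp (-(d/2) * x ^ 2) = (1/d) * ∫ x : ℝ, Real.exp (-(d/2) * x ^ 2) := by
  have hb : (0:ℝ) < d/2 := by linarith
  have h2 : ∀ x : ℝ, x ^ (2:ℝ) = x ^ 2 := fun x => by
    rw [show (2:ℝ) = ((2:ℕ):ℝ) by norm_num, Real.rpow_natCast]
  have hx2w : Integrable (fun x : ℝ => x ^ 2 * Real.exp (-(d/2) * x ^ 2)) := by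
    have := integrable_rpow_mul_exp_neg_mul_sq hb (s := 2) (by norm_num)
    simpa only [h2] using this
  have hw : Integrable (fun x : ℝ => Real.exp (-(d/2) * x ^ 2)) := integrable_exp_neg_mul_sq hb
  have hxw : Integrable (fun x : ℝ => x * Real.exp (-(d/2) * x ^ 2)) :=
    integrable_mul_exp_neg_mul_sq hb
  have hu : ∀ x : ℝ, HasDerivAt (fun y : ℝ => y) 1 x := fun x => hasDerivAt_id x
  have hv : ∀ x : ℝ, HasDerivAt (fun y : ℝ => Real.exp (-(d/2) * y ^ 2))
      ((-d * x) * Real.exp (-(d/2) * x ^ 2)) x := by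
    intro x
    have := ((hasDerivAt_pow 2 x).const_mul (-(d/2))).exp
    convert this using 1
    ring
  have key := integral_mul_deriv_eq_deriv_mul_of_integrable (fun x _ => hu x) (fun x _ => hv x)
    (huv' := ?_) (hu'v := ?_) (huv := ?_)
  · have e1 : ∫ x : ℝ, x * ((-d * x) * Real.exp (-(d/2) * x ^ 2))
        = -d * ∫ x : ℝ, x ^ 2 * Real.exp (-(d/2) * x ^ 2) := by
      rw [← integral_const_mul]
      congr 1 with x; ring
    have e2 : ∫ x : ℝ, (1:ℝ) * Real.exp (-(d/2) * x ^ 2)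
        = ∫ x : ℝ, Real.exp (-(d/2) * x ^ 2) := by simp
    rw [e1, e2] at key
    field_simp at key ⊢
    linarith
  · have : Integrable (fun x : ℝ => (-d) * (x ^ 2 * Real.exp (-(d/2) * x ^ 2))) :=
      hx2w.const_mul _
    apply this.congr
    filter_upwards with x
    show (-d) * (x ^ 2 * _) = x * ((-d * x) * _)
    ring
  · apply hw.congr
    filter_upwards with x
    show Real.exp _ = 1 * Real.exp _
    rw [one_mul]
  · exact hxw

/-- for `d > 0` and `V` even, nondecreasing on `[0,∞)`, measurable, with
`0 < ∫ e^{-V(x) - d x²/2} dx < ∞`, the probability measure `μ` with density proportional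
to `e^{-V(x) - d x²/2}` with respect to Lebesgue measure has variance at most `1/d`. -/
theorem stmt7 (d : ℝ) (hd : 0 < d) (V : ℝ → ℝ)
    (hVeven : ∀ x, V (-x) = V x)
    (hVmono : MonotoneOn V (Set.Ici 0))
    (hVmeas : Measurable V)
    (hint : Integrable (fun x => Real.exp (-V x - d * x ^ 2 / 2)))
    (hpos : 0 < ∫ x, Real.exp (-V x - d * x ^ 2 / 2))
    (μ : Measure ℝ)
    (hμ : μ = (ENNReal.ofReal (∫ x, Real.exp (-V x - d * x ^ 2 / 2)))⁻¹ •
      (MeasureTheory.volume.withDensity fun x =>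
        ENNReal.ofReal (Real.exp (-V x - d * x ^ 2 / 2)))) :
    ProbabilityTheory.variance id μ ≤ 1 / d := by
  classical
  set f : ℝ → ℝ := fun x => Real.exp (-V x - d * x ^ 2 / 2) with hfdef
  set w : ℝ → ℝ := fun x => Real.exp (-(d/2) * x ^ 2) with hwdef
  set Z : ℝ := ∫ x, f x with hZdef
  have hb : (0:ℝ) < d/2 := by linarith
  have hfpos : ∀ x, 0 < f x := fun x => Real.exp_pos _
  have hwpos : ∀ x, 0 < w x := fun x => Real.exp_pos _
  have hfmeas : Measurable f := by
    apply Real.measurable_exp.comp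
    exact (hVmeas.neg.sub (((measurable_id.pow_const 2).const_mul d).div_const 2))
  have hfw : ∀ x, f x = Real.exp (-V x) * w x := by
    intro x
    rw [hfdef, hwdef, ← Real.exp_add]
    ring_nf
  -- V is minimized at 0
  have hVabs : ∀ x, V |x| = V x := by
    intro x
    rcases abs_choice x with h | h
    · rw [h]
    · rw [h, hVeven]
  have hV0 : ∀ x, V 0 ≤ V x := by
    intro x
    rw [← hVabs x]
    exact hVmono (by simp) (by simp [abs_nonneg]) (abs_nonneg x)
  have hfle : ∀ x, f x ≤ Real.exp (-V 0) * w x := by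
    intro x
    rw [hfw x]
    exact mul_le_mul_of_nonneg_right (Real.exp_le_exp.2 (by linarith [hV0 x])) (hwpos x).le
  -- integrabilities
  have h2 : ∀ x : ℝ, x ^ (2:ℝ) = x ^ 2 := fun x => by
    rw [show (2:ℝ) = ((2:ℕ):ℝ) by norm_num, Real.rpow_natCast]
  have hw_int : Integrable w := integrable_exp_neg_mul_sq hb
  have hx2w_int : Integrable (fun x : ℝ => x ^ 2 * w x) := by
    have := integrable_rpow_mul_exp_neg_mul_sq hb (s := 2) (by norm_num)
    simpa only [h2] using this
  have hx2f_int : Integrable (fun x : ℝ => x ^ 2 * f x) := by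
    apply Integrable.mono' (hx2w_int.const_mul (Real.exp (-V 0)))
    · exact ((measurable_id.pow_const 2).mul hfmeas).aestronglyMeasurable
    · filter_upwards with x
      rw [Real.norm_eq_abs, abs_of_nonneg (by positivity)]
      calc x ^ 2 * f x ≤ x ^ 2 * (Real.exp (-V 0) * w x) := by
            apply mul_le_mul_of_nonneg_left (hfle x) (by positivity)
        _ = Real.exp (-V 0) * (x ^ 2 * w x) := by ring
  have hxf_int : Integrable (fun x : ℝ => x * f x) := by
    apply Integrable.mono' (((integrable_mul_exp_neg_mul_sq hb).abs).const_mul (Real.exp (-V 0)))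
    · exact (measurable_id.mul hfmeas).aestronglyMeasurable
    · filter_upwards with x
      rw [Real.norm_eq_abs, abs_mul, abs_of_nonneg (hfpos x).le]
      calc |x| * f x ≤ |x| * (Real.exp (-V 0) * w x) := by
            apply mul_le_mul_of_nonneg_left (hfle x) (abs_nonneg x)
        _ = Real.exp (-V 0) * |x * w x| := by
            rw [abs_mul, abs_of_nonneg (hwpos x).le]; ring
  -- mean zero
  have hfeven : ∀ x, f (-x) = f x := by
    intro x
    show Real.exp (-V (-x) - d * (-x) ^ 2 / 2) = Real.exp (-V x - d * x ^ 2 / 2)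
    rw [hVeven]
    congr 1
    ring
  have hM : ∫ x, x * f x = 0 := by
    have h1 : ∫ x, (-x) * f (-x) = ∫ x, x * f x := by
      simpa using integral_neg_eq_self (fun x => x * f x) (volume : Measure ℝ)
    have h2' : ∀ x : ℝ, (-x) * f (-x) = -(x * f x) := by
      intro x; rw [hfeven]; ring
    simp only [h2'] at h1
    rw [integral_neg] at h1
    linarith
  -- positivity of the gaussian normalization
  have hZ1 : (0:ℝ) < ∫ x, w x := by
    rw [hwdef, integral_gaussian]
    apply Real.sqrt_pos.2
    positivity
  set I : ℝ := ∫ x, x ^ 2 * f x with hIdef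
  set Z₁ : ℝ := ∫ x, w x with hZ1def
  set J : ℝ := ∫ x, x ^ 2 * w x with hJdef
  -- Chebyshev-type correlation inequality
  have hcheb : I * Z₁ ≤ J * Z := by
    have key : ∀ p : ℝ × ℝ,
        (p.1 ^ 2 * f p.1) * w p.2 - (p.1 ^ 2 * w p.1) * f p.2
          - f p.1 * (p.2 ^ 2 * w p.2) + w p.1 * (p.2 ^ 2 * f p.2) ≤ 0 := by
      rintro ⟨x, y⟩
      have hsign : (x ^ 2 - y ^ 2) * (Real.exp (-V x) - Real.exp (-V y)) ≤ 0 := by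
        rcases le_total |x| |y| with h | h
        · have hx2 : x ^ 2 ≤ y ^ 2 := by
            rw [← sq_abs x, ← sq_abs y]
            exact pow_le_pow_left₀ (abs_nonneg x) h 2
          have hV' : V x ≤ V y := by
            rw [← hVabs x, ← hVabs y]
            exact hVmono (by simp [abs_nonneg]) (by simp [abs_nonneg]) h
          have : Real.exp (-V y) ≤ Real.exp (-V x) := Real.exp_le_exp.2 (by linarith)
          exact mul_nonpos_of_nonpos_of_nonneg (by linarith) (by linarith)
        · have hx2 : y ^ 2 ≤ x ^ 2 := by
            rw [← sq_abs x, ← sq_abs y]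
            exact pow_le_pow_left₀ (abs_nonneg y) h 2
          have hV' : V y ≤ V x := by
            rw [← hVabs x, ← hVabs y]
            exact hVmono (by simp [abs_nonneg]) (by simp [abs_nonneg]) h
          have : Real.exp (-V x) ≤ Real.exp (-V y) := Real.exp_le_exp.2 (by linarith)
          exact mul_nonpos_of_nonneg_of_nonpos (by linarith) (by linarith)
      have e1 : (x ^ 2 * f x) * w y - (x ^ 2 * w x) * f y
          - f x * (y ^ 2 * w y) + w x * (y ^ 2 * f y)
          = ((x ^ 2 - y ^ 2) * (Real.exp (-V x) - Real.exp (-V y))) * (w x * w y) := by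
        rw [hfw x, hfw y]
        ring
      rw [e1]
      exact mul_nonpos_of_nonpos_of_nonneg hsign (by positivity)
    set ν : Measure (ℝ × ℝ) := (volume : Measure ℝ).prod volume with hνdef
    have hi1 : Integrable (fun p : ℝ × ℝ => (p.1 ^ 2 * f p.1) * w p.2) ν :=
      hx2f_int.mul_prod hw_int
    have hi2 : Integrable (fun p : ℝ × ℝ => (p.1 ^ 2 * w p.1) * f p.2) ν :=
      hx2w_int.mul_prod hint
    have hi3 : Integrable (fun p : ℝ × ℝ => f p.1 * (p.2 ^ 2 * w p.2)) ν :=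
      hint.mul_prod hx2w_int
    have hi4 : Integrable (fun p : ℝ × ℝ => w p.1 * (p.2 ^ 2 * f p.2)) ν :=
      hw_int.mul_prod hx2f_int
    have hiA : Integrable (fun p : ℝ × ℝ =>
        (p.1 ^ 2 * f p.1) * w p.2 - (p.1 ^ 2 * w p.1) * f p.2) ν := hi1.sub hi2
    have hiB : Integrable (fun p : ℝ × ℝ =>
        (p.1 ^ 2 * f p.1) * w p.2 - (p.1 ^ 2 * w p.1) * f p.2
          - f p.1 * (p.2 ^ 2 * w p.2)) ν := hiA.sub hi3
    have hile : ∫ p, ((p.1 ^ 2 * f p.1) * w p.2 - (p.1 ^ 2 * w p.1) * f p.2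
          - f p.1 * (p.2 ^ 2 * w p.2) + w p.1 * (p.2 ^ 2 * f p.2)) ∂ν ≤ 0 :=
      integral_nonpos key
    have hsplit : ∫ p, ((p.1 ^ 2 * f p.1) * w p.2 - (p.1 ^ 2 * w p.1) * f p.2
          - f p.1 * (p.2 ^ 2 * w p.2) + w p.1 * (p.2 ^ 2 * f p.2)) ∂ν
        = I * Z₁ - J * Z - Z * J + Z₁ * I := by
      rw [integral_add hiB hi4, integral_sub hiA hi3, integral_sub hi1 hi2,
        integral_prod_mul (fun x : ℝ => x ^ 2 * f x) w,
        integral_prod_mul (fun x : ℝ => x ^ 2 * w x) f,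
        integral_prod_mul f (fun x : ℝ => x ^ 2 * w x),
        integral_prod_mul w (fun x : ℝ => x ^ 2 * f x)]
    rw [hsplit] at hile
    linarith
  have hI_le : I ≤ Z / d := by
    have hJval : J = (1/d) * Z₁ := gauss_second_moment d hd
    rw [hJval] at hcheb
    have h3 : I * Z₁ ≤ Z / d * Z₁ := by
      calc I * Z₁ ≤ 1 / d * Z₁ * Z := hcheb
        _ = Z / d * Z₁ := by ring
    exact le_of_mul_le_mul_right h3 hZ1
  -- relate μ-integrals to weighted integrals
  set fn : ℝ → ℝ≥0 := fun x => Real.toNNReal (f x) with hfndef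
  have hfnmeas : Measurable fn := hfmeas.real_toNNReal
  have hZpos : 0 < Z := hpos
  have hμ' : μ = (ENNReal.ofReal Z)⁻¹ • (volume.withDensity fun x => ((fn x : ℝ≥0) : ℝ≥0∞)) := by
    rw [hμ]
    rfl
  have htoReal : ((ENNReal.ofReal Z)⁻¹).toReal = Z⁻¹ := by
    rw [ENNReal.toReal_inv, ENNReal.toReal_ofReal hZpos.le]
  have hconv : ∀ g : ℝ → ℝ, (∫ x, g x ∂μ) = Z⁻¹ * ∫ x, f x * g x := by
    intro g
    rw [hμ', integral_smul_measure, htoReal,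
      integral_withDensity_eq_integral_smul hfnmeas]
    rw [smul_eq_mul]
    congr 1
    apply integral_congr_ae
    filter_upwards with x
    rw [NNReal.smul_def, hfndef, Real.coe_toNNReal _ (hfpos x).le, smul_eq_mul]
  -- μ is a probability measure
  have hν0univ : (volume.withDensity fun x => ((fn x : ℝ≥0) : ℝ≥0∞)) univ = ENNReal.ofReal Z := by
    rw [withDensity_apply _ MeasurableSet.univ, setLIntegral_univ]
    exact (ofReal_integral_eq_lintegral_ofReal hint
      (Filter.Eventually.of_forall fun x => (hfpos x).le)).symm
  haveI hprob : IsProbabilityMeasure μ := by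
    constructor
    rw [hμ', Measure.smul_apply, hν0univ, smul_eq_mul]
    exact ENNReal.inv_mul_cancel (by simp [hZpos]) ENNReal.ofReal_ne_top
  -- integrability of x ↦ x^2 w.r.t. μ
  have hsq_int : Integrable (fun x : ℝ => x ^ 2) μ := by
    rw [hμ']
    apply Integrable.smul_measure _ (ENNReal.inv_ne_top.2 (by simp [hZpos]))
    rw [integrable_withDensity_iff_integrable_smul hfnmeas]
    apply hx2f_int.congr
    filter_upwards with x
    rw [NNReal.smul_def, hfndef, Real.coe_toNNReal _ (hfpos x).le, smul_eq_mul, mul_comm]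
  have hmem : MemLp (id : ℝ → ℝ) 2 μ := by
    rw [memLp_two_iff_integrable_sq aestronglyMeasurable_id]
    exact hsq_int
  have hvar := variance_eq_sub hmem
  rw [hvar]
  have hid2 : μ[(id : ℝ → ℝ) ^ 2] = Z⁻¹ * I := by
    have e : μ[(id : ℝ → ℝ) ^ 2] = ∫ x, x ^ 2 ∂μ := by
      apply integral_congr_ae
      filter_upwards with x
      simp [pow_two]
    rw [e, hconv (fun x => x ^ 2), hIdef]
    congr 1
    apply integral_congr_ae
    filter_upwards with x
    ring
  have hid1 : μ[(id : ℝ → ℝ)] = 0 := by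
    have e : μ[(id : ℝ → ℝ)] = ∫ x, x ∂μ := rfl
    rw [e, hconv (fun x => x)]
    have e2 : ∫ x, f x * x = ∫ x, x * f x := by
      apply integral_congr_ae
      filter_upwards with x
      ring
    rw [e2, hM, mul_zero]
  rw [hid2, hid1]
  have hfin : Z⁻¹ * I ≤ Z⁻¹ * (Z / d) :=
    mul_le_mul_of_nonneg_left hI_le (by positivity)
  calc Z⁻¹ * I - 0 ^ 2 = Z⁻¹ * I := by ring
    _ ≤ Z⁻¹ * (Z / d) := hfin
    _ = 1 / d := by field_simp
end

section
/- Let a > 0 and let π be a probability measure on ℝ with supp(π) ⊆ [−a, a] and m(π) < 0 < M(π). If σ² > a², then the function F(u) := G(u, 1/σ²) − u²/(2σ²) is κ-strongly convex on (m(π), M(π)) with modulus κ = 1/a² − 1/σ² > 0, i.e. u ↦ F(u) − (κ/2)u² is convex on (m(π), M(π)). -/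
open MeasureTheory ProbabilityTheory Filter Set
open scoped ENNReal NNReal

lemma hoeffding_core (p q : ℝ) (hp : 0 ≤ p) (hq : 0 ≤ q) (hpq : p + q = 1) (s : ℝ) :
    p * Real.exp s + q * Real.exp (-s) ≤ Real.exp ((p - q) * s + s ^ 2 / 2) := by
  set D : ℝ → ℝ := fun s => p * Real.exp s + q * Real.exp (-s) with hDdef
  set N : ℝ → ℝ := fun s => p * Real.exp s - q * Real.exp (-s) with hNdef
  have hD : ∀ s, 0 < D s := by
    intro s
    rcases hp.lt_or_eq with hp' | hp'
    · have h1 : 0 ≤ q * Real.exp (-s) := mul_nonneg hq (Real.exp_pos _).le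
      have h2 := mul_pos hp' (Real.exp_pos s)
      simp only [hDdef]; linarith
    · have hq1 : q = 1 := by linarith
      have := Real.exp_pos (-s)
      simp only [hDdef, ← hp', hq1]; linarith
  have hD' : ∀ s, HasDerivAt D (N s) s := by
    intro s
    have h1 : HasDerivAt (fun s : ℝ => p * Real.exp s) (p * Real.exp s) s :=
      (Real.hasDerivAt_exp s).const_mul p
    have h2 : HasDerivAt (fun s : ℝ => q * Real.exp (-s)) (q * (Real.exp (-s) * (-1))) s :=
      (((hasDerivAt_id s).neg).exp).const_mul q
    have := h1.add h2
    convert this using 1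
    show p * Real.exp s - q * Real.exp (-s) = _; ring
    all_goals rfl
  have hN' : ∀ s, HasDerivAt N (D s) s := by
    intro s
    have h1 : HasDerivAt (fun s : ℝ => p * Real.exp s) (p * Real.exp s) s :=
      (Real.hasDerivAt_exp s).const_mul p
    have h2 : HasDerivAt (fun s : ℝ => q * Real.exp (-s)) (q * (Real.exp (-s) * (-1))) s :=
      (((hasDerivAt_id s).neg).exp).const_mul q
    have := h1.sub h2
    convert this using 1
    show p * Real.exp s + q * Real.exp (-s) = _; ring
    all_goals rfl
  set G : ℝ → ℝ := fun s => (p - q) + s - N s / D s with hGdef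
  have hG' : ∀ s, HasDerivAt G ((N s)^2 / (D s)^2) s := by
    intro s
    have hdiv : HasDerivAt (fun s => N s / D s)
        ((D s * D s - N s * N s) / (D s)^2) s :=
      (hN' s).div (hD' s) (hD s).ne'
    have hlin : HasDerivAt (fun s : ℝ => (p - q) + s) 1 s :=
      (hasDerivAt_id s).const_add (p - q)
    have := hlin.sub hdiv
    convert this using 1
    show N s ^ 2 / D s ^ 2 = 1 - (D s * D s - N s * N s) / D s ^ 2
    have h0 : (D s)^2 ≠ 0 := pow_ne_zero 2 (hD s).ne'
    rw [eq_sub_iff_add_eq, ← add_div, div_eq_one_iff_eq h0]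
    ring
    all_goals rfl
  have hGmono : Monotone G := by
    apply monotone_of_deriv_nonneg
    · exact fun s => (hG' s).differentiableAt
    · intro s
      rw [(hG' s).deriv]
      positivity
  have hG0 : G 0 = 0 := by
    simp only [hGdef, hNdef, hDdef]
    simp [hpq]
  set F : ℝ → ℝ := fun s => (p - q) * s + s ^ 2 / 2 - Real.log (D s) with hFdef
  have hF' : ∀ s, HasDerivAt F (G s) s := by
    intro s
    have hlog : HasDerivAt (fun s => Real.log (D s)) (N s / D s) s :=
      (hD' s).log (hD s).ne'
    have hpoly : HasDerivAt (fun s : ℝ => (p - q) * s + s ^ 2 / 2)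
        ((p - q) + s) s := by
      have h1 : HasDerivAt (fun s : ℝ => (p - q) * s) (p - q) s := by
        simpa using (hasDerivAt_id s).const_mul (p - q)
      have h2 : HasDerivAt (fun s : ℝ => s ^ 2 / 2) (s) s := by
        have := (hasDerivAt_pow 2 s).div_const 2
        simpa using this
      exact h1.add h2
    exact hpoly.sub hlog
  have hFdiff : ∀ s, DifferentiableAt ℝ F s := fun s => (hF' s).differentiableAt
  have hF0 : F 0 = 0 := by
    simp only [hFdef, hDdef]
    simp [hpq]
  have key : ∀ s, 0 ≤ F s := by
    intro s
    rcases le_or_gt 0 s with hs | hs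
    · have hmono : MonotoneOn F (Set.Ici 0) := by
        apply monotoneOn_of_deriv_nonneg (convex_Ici 0)
          (Continuous.continuousOn (by
            exact (Differentiable.continuous (fun x => hFdiff x))))
          (fun x _ => (hFdiff x).differentiableWithinAt)
        intro x hx
        rw [interior_Ici] at hx
        rw [(hF' x).deriv]
        have := hGmono (le_of_lt hx)
        rw [hG0] at this; exact this
      have := hmono (Set.self_mem_Ici) hs hs
      rw [hF0] at this; exact this
    · have hanti : AntitoneOn F (Set.Iic 0) := by
        apply antitoneOn_of_deriv_nonpos (convex_Iic 0)
          (Continuous.continuousOn (by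
            exact (Differentiable.continuous (fun x => hFdiff x))))
          (fun x _ => (hFdiff x).differentiableWithinAt)
        intro x hx
        rw [interior_Iic] at hx
        rw [(hF' x).deriv]
        have := hGmono (le_of_lt hx)
        rw [hG0] at this; exact this
      have := hanti hs.le (Set.self_mem_Iic) hs.le
      rw [hF0] at this; exact this
  have := key s
  have hlog : Real.log (D s) ≤ (p - q) * s + s ^ 2 / 2 := by
    simp only [hFdef] at this; linarith
  calc D s = Real.exp (Real.log (D s)) := (Real.exp_log (hD s)).symm
    _ ≤ Real.exp ((p - q) * s + s ^ 2 / 2) := Real.exp_le_exp.mpr hlog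

lemma ae_mem_Icc (pr : Measure ℝ) (a : ℝ) (hsupp : msupp pr ⊆ Set.Icc (-a) a) :
    ∀ᵐ x ∂pr, x ∈ Set.Icc (-a) a := by
  set S : Set (Set ℝ) := {U | IsOpen U ∧ pr U = 0} with hS
  obtain ⟨T, hTc, hTS, hTU⟩ := TopologicalSpace.isOpen_sUnion_countable S (fun s hs => hs.1)
  have hTnull : pr (⋃₀ S) = 0 := by
    rw [← hTU]
    exact (measure_sUnion_null_iff hTc).mpr (fun s hs => (hTS hs).2)
  have hsub : {x : ℝ | x ∉ Set.Icc (-a) a} ⊆ ⋃₀ S := by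
    intro x hx
    have hxm : x ∉ msupp pr := fun hm => hx (hsupp hm)
    simp only [msupp, Set.mem_setOf_eq] at hxm
    push_neg at hxm
    obtain ⟨U, hU, hU0⟩ := hxm
    obtain ⟨O, hOU, hOopen, hxO⟩ := mem_nhds_iff.mp hU
    exact ⟨O, ⟨hOopen, measure_mono_null hOU hU0⟩, hxO⟩
  rw [MeasureTheory.ae_iff]
  exact measure_mono_null hsub hTnull

lemma exp_arg_bound (a γ d x : ℝ) (hx : |x| ≤ a) :
    |γ * x - d / 2 * x ^ 2| ≤ |γ| * a + |d| / 2 * a ^ 2 := by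
  have ha : 0 ≤ a := (abs_nonneg x).trans hx
  have h1 : |γ * x| ≤ |γ| * a := by
    rw [abs_mul]; exact mul_le_mul_of_nonneg_left hx (abs_nonneg γ)
  have h2 : |d / 2 * x ^ 2| ≤ |d| / 2 * a ^ 2 := by
    have hx2 : x ^ 2 ≤ a ^ 2 := by nlinarith [abs_le.mp hx, abs_nonneg x]
    rw [abs_mul, abs_of_nonneg (sq_nonneg x), show |d / 2| = |d| / 2 by
      rw [abs_div]; norm_num]
    exact mul_le_mul_of_nonneg_left hx2 (by positivity)
  calc |γ * x - d / 2 * x ^ 2| ≤ |γ * x| + |d / 2 * x ^ 2| := abs_sub _ _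
    _ ≤ |γ| * a + |d| / 2 * a ^ 2 := add_le_add h1 h2

lemma integrable_linear_mul_exp (pr : Measure ℝ) [IsProbabilityMeasure pr] (a γ d c₀ c₁ : ℝ)
    (hae : ∀ᵐ x ∂pr, x ∈ Set.Icc (-a) a) :
    Integrable (fun x => (c₀ + c₁ * x) * Real.exp (γ * x - d / 2 * x ^ 2)) pr := by
  apply Integrable.mono'
    (integrable_const ((|c₀| + |c₁| * a) * Real.exp (|γ| * a + |d| / 2 * a ^ 2)))
  · exact (Continuous.aestronglyMeasurable (by fun_prop))
  · filter_upwards [hae] with x hx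
    have hxa : |x| ≤ a := abs_le.mpr hx
    have ha0 : (0:ℝ) ≤ a := (abs_nonneg x).trans hxa
    have h1 : |c₀ + c₁ * x| ≤ |c₀| + |c₁| * a := by
      calc |c₀ + c₁ * x| ≤ |c₀| + |c₁ * x| := abs_add_le _ _
        _ ≤ |c₀| + |c₁| * a := by
            rw [abs_mul]; exact add_le_add_right (mul_le_mul_of_nonneg_left hxa (abs_nonneg c₁)) _
    have h2 : Real.exp (γ * x - d / 2 * x ^ 2) ≤ Real.exp (|γ| * a + |d| / 2 * a ^ 2) :=
      Real.exp_le_exp.mpr ((le_abs_self _).trans (exp_arg_bound a γ d x hxa))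
    rw [Real.norm_eq_abs, abs_mul, abs_of_pos (Real.exp_pos _)]
    exact mul_le_mul h1 h2 (Real.exp_pos _).le (by positivity)

lemma Z_pos (pr : Measure ℝ) [IsProbabilityMeasure pr] (a γ d : ℝ)
    (hae : ∀ᵐ x ∂pr, x ∈ Set.Icc (-a) a) :
    0 < ∫ x, Real.exp (γ * x - d / 2 * x ^ 2) ∂pr := by
  set B : ℝ := |γ| * a + |d| / 2 * a ^ 2 with hB
  have hint : Integrable (fun x => Real.exp (γ * x - d / 2 * x ^ 2)) pr := by
    simpa using integrable_linear_mul_exp pr a γ d 1 0 hae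
  have hlow : ∀ᵐ x ∂pr, Real.exp (-B) ≤ Real.exp (γ * x - d / 2 * x ^ 2) := by
    filter_upwards [hae] with x hx
    exact Real.exp_le_exp.mpr (neg_le_of_abs_le (exp_arg_bound a γ d x (abs_le.mpr hx)))
  have hmono := integral_mono_ae (integrable_const (Real.exp (-B))) hint hlow
  have hc : (∫ (_ : ℝ), Real.exp (-B) ∂pr) = Real.exp (-B) := by
    simp [integral_const]
  rw [hc] at hmono
  exact lt_of_lt_of_le (Real.exp_pos _) hmono

lemma tiltMean_eq (pr : Measure ℝ) [IsProbabilityMeasure pr] (γ d : ℝ) :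
    tiltMean pr γ d
      = (∫ x, x * Real.exp (γ * x - d / 2 * x ^ 2) ∂pr) / Real.exp (cgf pr γ d) := by
  rw [tiltMean, tilt]
  have hmeas : Measurable fun x : ℝ =>
      (Real.exp (γ * x - d / 2 * x ^ 2 - cgf pr γ d)).toNNReal :=
    (by fun_prop : Measurable fun x : ℝ =>
      Real.exp (γ * x - d / 2 * x ^ 2 - cgf pr γ d)).real_toNNReal
  rw [show (fun x : ℝ => ENNReal.ofReal (Real.exp (γ * x - d / 2 * x ^ 2 - cgf pr γ d)))
      = fun x : ℝ => ((Real.exp (γ * x - d / 2 * x ^ 2 - cgf pr γ d)).toNNReal : ℝ≥0∞)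
    from rfl]
  rw [integral_withDensity_eq_integral_smul hmeas]
  have : ∀ x : ℝ, (Real.exp (γ * x - d / 2 * x ^ 2 - cgf pr γ d)).toNNReal • x
      = (Real.exp (cgf pr γ d))⁻¹ * (x * Real.exp (γ * x - d / 2 * x ^ 2)) := by
    intro x
    rw [NNReal.smul_def, smul_eq_mul, Real.coe_toNNReal _ (Real.exp_nonneg _),
      Real.exp_sub]
    field_simp
  simp_rw [this]
  rw [integral_const_mul]
  ring

/-- Integral of a linear function against the weight. -/
lemma integral_linear_mul_exp (pr : Measure ℝ) [IsProbabilityMeasure pr] (a γ d c₀ c₁ m : ℝ)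
    (hae : ∀ᵐ x ∂pr, x ∈ Set.Icc (-a) a)
    (hm : ∫ x, x * Real.exp (γ * x - d / 2 * x ^ 2) ∂pr
        = m * ∫ x, Real.exp (γ * x - d / 2 * x ^ 2) ∂pr) :
    ∫ x, (c₀ + c₁ * x) * Real.exp (γ * x - d / 2 * x ^ 2) ∂pr
      = (c₀ + c₁ * m) * ∫ x, Real.exp (γ * x - d / 2 * x ^ 2) ∂pr := by
  have h1 : Integrable (fun x => c₀ * Real.exp (γ * x - d / 2 * x ^ 2)) pr := by
    simpa using integrable_linear_mul_exp pr a γ d c₀ 0 hae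
  have h2 : Integrable (fun x => c₁ * x * Real.exp (γ * x - d / 2 * x ^ 2)) pr := by
    have := integrable_linear_mul_exp pr a γ d 0 c₁ hae
    simpa using this
  have : (fun x => (c₀ + c₁ * x) * Real.exp (γ * x - d / 2 * x ^ 2))
      = fun x => c₀ * Real.exp (γ * x - d / 2 * x ^ 2)
          + c₁ * x * Real.exp (γ * x - d / 2 * x ^ 2) := by
    funext x; ring
  rw [this, integral_add h1 h2]
  have e1 : ∫ x, c₀ * Real.exp (γ * x - d / 2 * x ^ 2) ∂pr
      = c₀ * ∫ x, Real.exp (γ * x - d / 2 * x ^ 2) ∂pr := integral_const_mul _ _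
  have e2 : ∫ x, c₁ * x * Real.exp (γ * x - d / 2 * x ^ 2) ∂pr
      = c₁ * ∫ x, x * Real.exp (γ * x - d / 2 * x ^ 2) ∂pr := by
    simp_rw [mul_assoc]
    exact integral_const_mul _ _
  rw [e1, e2, hm]; ring

/-- Lemma A: lower bound on cgf increments. -/
lemma cgf_lower (pr : Measure ℝ) [IsProbabilityMeasure pr] (a γ d t m : ℝ)
    (hae : ∀ᵐ x ∂pr, x ∈ Set.Icc (-a) a)
    (hm : ∫ x, x * Real.exp (γ * x - d / 2 * x ^ 2) ∂pr
        = m * ∫ x, Real.exp (γ * x - d / 2 * x ^ 2) ∂pr) :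
    cgf pr γ d + t * m ≤ cgf pr (γ + t) d := by
  set Z := ∫ x, Real.exp (γ * x - d / 2 * x ^ 2) ∂pr with hZdef
  set Z' := ∫ x, Real.exp ((γ + t) * x - d / 2 * x ^ 2) ∂pr with hZ'def
  have hZ := Z_pos pr a γ d hae
  have hZ' := Z_pos pr a (γ + t) d hae
  set c₀ : ℝ := Real.exp (t * m) * (1 - t * m) with hc₀
  set c₁ : ℝ := Real.exp (t * m) * t with hc₁
  have hint1 : Integrable (fun x => (c₀ + c₁ * x) * Real.exp (γ * x - d / 2 * x ^ 2)) pr :=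
    integrable_linear_mul_exp pr a γ d c₀ c₁ hae
  have hint2 : Integrable (fun x => Real.exp ((γ + t) * x - d / 2 * x ^ 2)) pr := by
    simpa using integrable_linear_mul_exp pr a (γ + t) d 1 0 hae
  have hpt : ∀ x : ℝ, (c₀ + c₁ * x) * Real.exp (γ * x - d / 2 * x ^ 2)
      ≤ Real.exp ((γ + t) * x - d / 2 * x ^ 2) := by
    intro x
    have hexp : Real.exp (t * m) * (1 + (t * x - t * m)) ≤ Real.exp (t * x) := by
      have h := Real.add_one_le_exp (t * x - t * m)
      have := mul_le_mul_of_nonneg_left h (Real.exp_nonneg (t * m))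
      calc Real.exp (t * m) * (1 + (t * x - t * m))
          = Real.exp (t * m) * (t * x - t * m + 1) := by ring
        _ ≤ Real.exp (t * m) * Real.exp (t * x - t * m) := this
        _ = Real.exp (t * x) := by rw [← Real.exp_add]; ring_nf
    have hw : (0:ℝ) < Real.exp (γ * x - d / 2 * x ^ 2) := Real.exp_pos _
    have := mul_le_mul_of_nonneg_right hexp hw.le
    calc (c₀ + c₁ * x) * Real.exp (γ * x - d / 2 * x ^ 2)
        = Real.exp (t * m) * (1 + (t * x - t * m)) * Real.exp (γ * x - d / 2 * x ^ 2) := by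
          rw [hc₀, hc₁]; ring
      _ ≤ Real.exp (t * x) * Real.exp (γ * x - d / 2 * x ^ 2) := this
      _ = Real.exp ((γ + t) * x - d / 2 * x ^ 2) := by rw [← Real.exp_add]; ring_nf
  have hle : ∫ x, (c₀ + c₁ * x) * Real.exp (γ * x - d / 2 * x ^ 2) ∂pr ≤ Z' :=
    integral_mono hint1 hint2 hpt
  rw [integral_linear_mul_exp pr a γ d c₀ c₁ m hae hm] at hle
  have hcc : (c₀ + c₁ * m) = Real.exp (t * m) := by rw [hc₀, hc₁]; ring
  rw [hcc] at hle
  have hlog : Real.log (Real.exp (t * m) * Z) ≤ Real.log Z' :=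
    Real.log_le_log (by positivity) hle
  rw [Real.log_mul (Real.exp_ne_zero _) hZ.ne', Real.log_exp] at hlog
  have e1 : _root_.cgf pr γ d = Real.log Z := by rw [hZdef]; rfl
  have e2 : _root_.cgf pr (γ + t) d = Real.log Z' := by rw [hZ'def]; rfl
  rw [e1, e2]; linarith

/-- Mean of the tilted weight lies in `[-a, a]`. -/
lemma mean_abs_le (pr : Measure ℝ) [IsProbabilityMeasure pr] (a γ d m : ℝ)
    (hae : ∀ᵐ x ∂pr, x ∈ Set.Icc (-a) a)
    (hm : ∫ x, x * Real.exp (γ * x - d / 2 * x ^ 2) ∂pr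
        = m * ∫ x, Real.exp (γ * x - d / 2 * x ^ 2) ∂pr) :
    |m| ≤ a := by
  set Z := ∫ x, Real.exp (γ * x - d / 2 * x ^ 2) ∂pr with hZdef
  have hZ := Z_pos pr a γ d hae
  have hx_int : Integrable (fun x => x * Real.exp (γ * x - d / 2 * x ^ 2)) pr := by
    simpa using integrable_linear_mul_exp pr a γ d 0 1 hae
  have ha_int : Integrable (fun x => a * Real.exp (γ * x - d / 2 * x ^ 2)) pr := by
    simpa using integrable_linear_mul_exp pr a γ d a 0 hae
  have habs_int : Integrable (fun x => |x| * Real.exp (γ * x - d / 2 * x ^ 2)) pr := by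
    have := hx_int.abs
    simpa [abs_mul, abs_of_pos (Real.exp_pos _)] using this
  have h1 : |∫ x, x * Real.exp (γ * x - d / 2 * x ^ 2) ∂pr|
      ≤ ∫ x, |x| * Real.exp (γ * x - d / 2 * x ^ 2) ∂pr := by
    simpa [Real.norm_eq_abs, abs_mul, abs_of_pos (Real.exp_pos _)] using
      norm_integral_le_integral_norm (fun x => x * Real.exp (γ * x - d / 2 * x ^ 2)) (μ := pr)
  have h2 : ∫ x, |x| * Real.exp (γ * x - d / 2 * x ^ 2) ∂pr
      ≤ ∫ x, a * Real.exp (γ * x - d / 2 * x ^ 2) ∂pr := by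
    apply integral_mono_ae habs_int ha_int
    filter_upwards [hae] with x hx
    exact mul_le_mul_of_nonneg_right (abs_le.mpr hx) (Real.exp_pos _).le
  have h3 : ∫ x, a * Real.exp (γ * x - d / 2 * x ^ 2) ∂pr = a * Z := integral_const_mul _ _
  rw [hm, abs_mul, abs_of_pos hZ] at h1
  have := h1.trans (h2.trans_eq h3)
  exact le_of_mul_le_mul_right this hZ

/-- Lemma B: Hoeffding upper bound on cgf increments. -/
lemma cgf_upper (pr : Measure ℝ) [IsProbabilityMeasure pr] (a γ d t m : ℝ) (ha : 0 < a)
    (hae : ∀ᵐ x ∂pr, x ∈ Set.Icc (-a) a)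
    (hm : ∫ x, x * Real.exp (γ * x - d / 2 * x ^ 2) ∂pr
        = m * ∫ x, Real.exp (γ * x - d / 2 * x ^ 2) ∂pr) :
    cgf pr (γ + t) d ≤ cgf pr γ d + t * m + a ^ 2 * t ^ 2 / 2 := by
  set Z := ∫ x, Real.exp (γ * x - d / 2 * x ^ 2) ∂pr with hZdef
  set Z' := ∫ x, Real.exp ((γ + t) * x - d / 2 * x ^ 2) ∂pr with hZ'def
  have hZ := Z_pos pr a γ d hae
  have hZ' := Z_pos pr a (γ + t) d hae
  have hma := mean_abs_le pr a γ d m hae hm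
  set c₀ : ℝ := (Real.exp (-(t * a)) + Real.exp (t * a)) / 2 with hc₀
  set c₁ : ℝ := (Real.exp (t * a) - Real.exp (-(t * a))) / (2 * a) with hc₁
  have hint1 : Integrable (fun x => (c₀ + c₁ * x) * Real.exp (γ * x - d / 2 * x ^ 2)) pr :=
    integrable_linear_mul_exp pr a γ d c₀ c₁ hae
  have hint2 : Integrable (fun x => Real.exp ((γ + t) * x - d / 2 * x ^ 2)) pr := by
    simpa using integrable_linear_mul_exp pr a (γ + t) d 1 0 hae
  have hpt : ∀ᵐ x ∂pr, Real.exp ((γ + t) * x - d / 2 * x ^ 2)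
      ≤ (c₀ + c₁ * x) * Real.exp (γ * x - d / 2 * x ^ 2) := by
    filter_upwards [hae] with x hx
    have hxa := abs_le.mpr hx
    set lam : ℝ := (x + a) / (2 * a) with hlam
    have hlam0 : 0 ≤ lam := by
      rw [hlam]; exact div_nonneg (by linarith [hx.1]) (by linarith)
    have hlam1 : 0 ≤ 1 - lam := by
      rw [hlam]
      have : (x + a) / (2 * a) ≤ 1 := by
        rw [div_le_one (by linarith)]; linarith [hx.2]
      linarith
    have hconv := convexOn_exp.2 (Set.mem_univ (-(t * a))) (Set.mem_univ (t * a))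
      hlam1 hlam0 (by ring)
    simp only [smul_eq_mul] at hconv
    have harg : (1 - lam) * (-(t * a)) + lam * (t * a) = t * x := by
      rw [hlam]; field_simp; ring
    rw [harg] at hconv
    have hchord : Real.exp (t * x) ≤ c₀ + c₁ * x := by
      refine hconv.trans_eq ?_
      rw [hc₀, hc₁, hlam]; field_simp; ring
    have hw : (0:ℝ) ≤ Real.exp (γ * x - d / 2 * x ^ 2) := (Real.exp_pos _).le
    calc Real.exp ((γ + t) * x - d / 2 * x ^ 2)
        = Real.exp (t * x) * Real.exp (γ * x - d / 2 * x ^ 2) := by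
          rw [← Real.exp_add]; ring_nf
      _ ≤ (c₀ + c₁ * x) * Real.exp (γ * x - d / 2 * x ^ 2) :=
          mul_le_mul_of_nonneg_right hchord hw
  have hle : Z' ≤ ∫ x, (c₀ + c₁ * x) * Real.exp (γ * x - d / 2 * x ^ 2) ∂pr :=
    integral_mono_ae hint2 hint1 hpt
  rw [integral_linear_mul_exp pr a γ d c₀ c₁ m hae hm] at hle
  -- identify with p, q
  set p : ℝ := (a + m) / (2 * a) with hp'
  set q : ℝ := (a - m) / (2 * a) with hq'
  have hp0 : 0 ≤ p := by
    rw [hp']; exact div_nonneg (by linarith [neg_le_of_abs_le hma]) (by linarith)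
  have hq0 : 0 ≤ q := by
    rw [hq']; exact div_nonneg (by linarith [le_of_abs_le hma]) (by linarith)
  have hpq : p + q = 1 := by rw [hp', hq']; field_simp; ring
  have hcpq : c₀ + c₁ * m = p * Real.exp (t * a) + q * Real.exp (-(t * a)) := by
    rw [hc₀, hc₁, hp', hq']; field_simp; ring
  have hhoef := hoeffding_core p q hp0 hq0 hpq (t * a)
  have hpmq : (p - q) * (t * a) = t * m := by
    rw [hp', hq']; field_simp; ring
  have hexp_eq : Real.exp ((p - q) * (t * a) + (t * a) ^ 2 / 2)
      = Real.exp (t * m + a ^ 2 * t ^ 2 / 2) := by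
    rw [hpmq]; ring_nf
  rw [hexp_eq] at hhoef
  have hfinal : Z' ≤ Real.exp (t * m + a ^ 2 * t ^ 2 / 2) * Z := by
    calc Z' ≤ (c₀ + c₁ * m) * Z := hle
      _ = (p * Real.exp (t * a) + q * Real.exp (-(t * a))) * Z := by rw [hcpq]
      _ ≤ Real.exp (t * m + a ^ 2 * t ^ 2 / 2) * Z :=
          mul_le_mul_of_nonneg_right hhoef hZ.le
  have hlog : Real.log Z' ≤ Real.log (Real.exp (t * m + a ^ 2 * t ^ 2 / 2) * Z) :=
    Real.log_le_log hZ' hfinal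
  rw [Real.log_mul (Real.exp_ne_zero _) hZ.ne', Real.log_exp] at hlog
  have e1 : _root_.cgf pr γ d = Real.log Z := by rw [hZdef]; rfl
  have e2 : _root_.cgf pr (γ + t) d = Real.log Z' := by rw [hZ'def]; rfl
  rw [e1, e2]; linarith

lemma hm_of_tiltMean (pr : Measure ℝ) [IsProbabilityMeasure pr] (a γ d u : ℝ)
    (hae : ∀ᵐ x ∂pr, x ∈ Set.Icc (-a) a) (ht : tiltMean pr γ d = u) :
    ∫ x, x * Real.exp (γ * x - d / 2 * x ^ 2) ∂pr
      = u * ∫ x, Real.exp (γ * x - d / 2 * x ^ 2) ∂pr := by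
  have hZ := Z_pos pr a γ d hae
  have hE : Real.exp (_root_.cgf pr γ d) = ∫ x, Real.exp (γ * x - d / 2 * x ^ 2) ∂pr :=
    Real.exp_log hZ
  rw [tiltMean_eq pr γ d, hE, div_eq_iff hZ.ne'] at ht
  exact ht

lemma convexOn_of_subderiv (s : Set ℝ) (hs : Convex ℝ s) (f : ℝ → ℝ)
    (H : ∀ z ∈ s, ∃ k : ℝ, ∀ u ∈ s, f z + k * (u - z) ≤ f u) : ConvexOn ℝ s f := by
  refine ⟨hs, fun x hx y hy p q hp hq hpq => ?_⟩
  obtain ⟨k, hk⟩ := H (p • x + q • y) (hs hx hy hp hq hpq)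
  have h1 := hk x hx
  have h2 := hk y hy
  simp only [smul_eq_mul] at *
  have hq' : q = 1 - p := by linarith
  subst hq'
  linarith [mul_le_mul_of_nonneg_left h1 hp, mul_le_mul_of_nonneg_left h2 hq]

/-- if `supp(π) ⊆ [-a,a]` with `m(π) < 0 < M(π)` and `σ² > a²`, then
`F(u) = G(u, 1/σ²) − u²/(2σ²)` is `κ`-strongly convex on `(m(π), M(π))` with modulus
`κ = 1/a² − 1/σ² > 0`. -/
theorem stmt10 (a : ℝ) (ha : 0 < a)
    (pr : Measure ℝ) [IsProbabilityMeasure pr]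
    (hsupp : msupp pr ⊆ Set.Icc (-a) a)
    (hneg : ∃ x ∈ msupp pr, x < 0) (hpos : ∃ x ∈ msupp pr, 0 < x)
    (s2 : ℝ) (hs2 : a ^ 2 < s2)
    (h : ℝ → ℝ)
    (hh : ∀ u ∈ Set.Ioo (sInf (msupp pr)) (sSup (msupp pr)),
      tiltMean pr (h u) (1 / s2) = u) :
    0 < 1 / a ^ 2 - 1 / s2 ∧
    ConvexOn ℝ (Set.Ioo (sInf (msupp pr)) (sSup (msupp pr))) (fun u =>
      (u * h u - cgf pr (h u) (1 / s2) + cgf pr 0 (1 / s2) - u ^ 2 / (2 * s2))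
        - (1 / a ^ 2 - 1 / s2) / 2 * u ^ 2) := by
  have ha2 : (0:ℝ) < a ^ 2 := by positivity
  have hs2pos : (0:ℝ) < s2 := ha2.trans hs2
  have hae := ae_mem_Icc pr a hsupp
  constructor
  · rw [sub_pos]
    exact one_div_lt_one_div_of_lt ha2 hs2
  · apply convexOn_of_subderiv _ (convex_Ioo _ _)
    intro z hz
    refine ⟨h z - z / a ^ 2, ?_⟩
    intro u hu
    have hmz := hm_of_tiltMean pr a (h z) (1 / s2) z hae (hh z hz)
    have hmu := hm_of_tiltMean pr a (h u) (1 / s2) u hae (hh u hu)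
    set t : ℝ := (u - z) / a ^ 2 with htdef
    have hA := cgf_lower pr a (h u) (1 / s2) (h z + t - h u) u hae hmu
    rw [show h u + (h z + t - h u) = h z + t by ring] at hA
    have hB := cgf_upper pr a (h z) (1 / s2) t z ha hae hmz
    have hC : _root_.cgf pr (h u) (1 / s2) + (h z + t - h u) * u
        ≤ _root_.cgf pr (h z) (1 / s2) + (t * z + a ^ 2 * t ^ 2 / 2) := by linarith
    have heq :
        (((z * h z - _root_.cgf pr (h z) (1 / s2) + _root_.cgf pr 0 (1 / s2)
              - z ^ 2 / (2 * s2)) - (1 / a ^ 2 - 1 / s2) / 2 * z ^ 2)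
            + (h z - z / a ^ 2) * (u - z))
          - ((u * h u - _root_.cgf pr (h u) (1 / s2) + _root_.cgf pr 0 (1 / s2)
              - u ^ 2 / (2 * s2)) - (1 / a ^ 2 - 1 / s2) / 2 * u ^ 2)
        = (_root_.cgf pr (h u) (1 / s2) + (h z + t - h u) * u)
          - (_root_.cgf pr (h z) (1 / s2) + (t * z + a ^ 2 * t ^ 2 / 2)) := by
      rw [htdef]
      field_simp
      ring
    linarith [hC, heq]
end
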